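/- arXiv:math/0701354 — 9 statements merged into one kernel-verified Lean document; each statement's English description precedes it below -/
import Mathlib

section
/- Let X be a Banach space containing no unconditional basic sequence, let (x_n) be a seminormalized basic sequence in X, and let S : [(x_n)] → X be a bounded linear operator such that (S x_n)_n converges in norm, where [(x_n)] denotes the closed linear span of (x_n). Then there exists a subsequence (x_{n_k}) of (x_n) such that the restriction of S to the closed linear span of (x_{n_{2k}} − x_{n_{2k−1}})_k is a compact operator. -/
/-!
Pass to a subsequence along which `S x_n` converges so fast that the differences
`z_k = x_{φ(2k+1)} - x_{φ(2k)}` satisfy `∑ ‖S z_k‖ < ∞`. Since `(x_n)` is basic and seminormalized,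
the coefficient `a_k` of `∑ a_k z_k` is (up to sign) its coefficient on `x_{φ(2k+1)}`, hence bounded
by `2C/c` times the norm. So `S` maps the dense part of the unit ball of `[z_k]` into the image of
a compact cube of coefficient sequences under the continuous map `t ↦ ∑ t_k S z_k`, and the
restriction of `S` to `[z_k]` is compact.
-/

open Filter

noncomputable section

/-- `x` is a basic sequence: nonzero terms and uniformly bounded initial-segment projections. -/
def IsBasicSeq {X : Type*} [NormedAddCommGroup X] [NormedSpace ℝ X] (x : ℕ → X) : Prop :=
  (∀ n, x n ≠ 0) ∧
  ∃ C : ℝ, 1 ≤ C ∧ ∀ (a : ℕ → ℝ) (m n : ℕ), m ≤ n →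
    ‖∑ i ∈ Finset.range m, a i • x i‖ ≤ C * ‖∑ i ∈ Finset.range n, a i • x i‖

/-- `x` is seminormalized: `0 < inf ‖x n‖ ≤ sup ‖x n‖ < ∞`. -/
def IsSeminormalized {X : Type*} [NormedAddCommGroup X] (x : ℕ → X) : Prop :=
  ∃ c C : ℝ, 0 < c ∧ ∀ n, c ≤ ‖x n‖ ∧ ‖x n‖ ≤ C

/-- `xt` is a spreading model of the sequence `x`. -/
def IsSpreadingModelOf {X W : Type*} [NormedAddCommGroup X] [NormedSpace ℝ X]
    [NormedAddCommGroup W] [NormedSpace ℝ W] (xt : ℕ → W) (x : ℕ → X) : Prop :=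
  ∃ ε : ℕ → ℝ, (∀ n, 0 < ε n) ∧ Antitone ε ∧ Tendsto ε atTop (nhds 0) ∧
    ∀ (n : ℕ) (a : ℕ → ℝ), (∀ i < n, |a i| ≤ 1) →
      ∀ k : ℕ → ℕ, StrictMono k → n ≤ k 0 →
        |‖∑ i ∈ Finset.range n, a i • x (k i)‖ - ‖∑ i ∈ Finset.range n, a i • xt i‖| < ε n

/-- `z` dominates `x` on small coefficients (`x << z`): `Δ_{(z),(x)}(ε) → 0` as `ε ↘ 0`. -/
def SCDominates {Z W : Type*} [NormedAddCommGroup Z] [NormedSpace ℝ Z]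
    [NormedAddCommGroup W] [NormedSpace ℝ W] (z : ℕ → Z) (x : ℕ → W) : Prop :=
  ∀ δ : ℝ, 0 < δ → ∃ ε : ℝ, 0 < ε ∧ ∀ (N : ℕ) (a : ℕ → ℝ),
    (∀ i, |a i| ≤ ε) → ‖∑ i ∈ Finset.range N, a i • z i‖ ≤ 1 →
    ‖∑ i ∈ Finset.range N, a i • x i‖ ≤ δ

/-- `x` dominates `y` (with some constant). -/
def Dominates {X Y : Type*} [NormedAddCommGroup X] [NormedSpace ℝ X]
    [NormedAddCommGroup Y] [NormedSpace ℝ Y] (x : ℕ → X) (y : ℕ → Y) : Prop :=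
  ∃ C : ℝ, 0 < C ∧ ∀ (N : ℕ) (a : ℕ → ℝ),
    ‖∑ i ∈ Finset.range N, a i • y i‖ ≤ C * ‖∑ i ∈ Finset.range N, a i • x i‖

/-- Property P1: `liminf_n inf_{|A| = n} ‖∑_{i ∈ A} z i‖ = ∞`. -/
def PropertyP1 {Z : Type*} [NormedAddCommGroup Z] (z : ℕ → Z) : Prop :=
  ∀ R : ℝ, ∃ N : ℕ, ∀ A : Finset ℕ, N ≤ A.card → R ≤ ‖∑ i ∈ A, z i‖

/-- Property P2. -/
def PropertyP2 {Z : Type*} [NormedAddCommGroup Z] [NormedSpace ℝ Z] (z : ℕ → Z) : Prop :=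
  ∀ ρ : ℝ, 0 < ρ → ∃ M : ℕ, ∀ (N : ℕ) (a : ℕ → ℝ),
    ‖∑ i ∈ Finset.range N, a i • z i‖ = 1 →
    ((Finset.range N).filter fun i => ρ ≤ |a i|).card ≤ M

/-- `z` is an unconditional (basic) sequence. -/
def IsUnconditionalSeq {Z : Type*} [NormedAddCommGroup Z] [NormedSpace ℝ Z] (z : ℕ → Z) : Prop :=
  ∃ C : ℝ, 1 ≤ C ∧ ∀ (a : ℕ → ℝ) (s A : Finset ℕ), A ⊆ s →
    ‖∑ i ∈ A, a i • z i‖ ≤ C * ‖∑ i ∈ s, a i • z i‖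

/-- There is a closed subspace `Y` of `X` with a basis and an operator `T : Y → X` which is
not a compact perturbation of a multiple of the inclusion map. -/
def ExistsNontrivialOperator (X : Type*) [NormedAddCommGroup X] [NormedSpace ℝ X] : Prop :=
  ∃ Y : Submodule ℝ X, IsClosed (Y : Set X) ∧
    (∃ b : ℕ → X, IsBasicSeq b ∧ Y = (Submodule.span ℝ (Set.range b)).topologicalClosure) ∧
    ∃ T : Y →L[ℝ] X,
      ¬ ∃ (c : ℝ) (K : Y →L[ℝ] X), IsCompactOperator K ∧ T = c • Y.subtypeL + K

open Filter Topology Metric Set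

lemma sum_range_smul_sub_eq {E : Type*} [AddCommGroup E] [Module ℝ E]
    (a : ℕ → ℝ) (w : ℕ → E) (N : ℕ) :
    ∑ k ∈ Finset.range N, a k • (w (2 * k + 1) - w (2 * k)) =
      ∑ i ∈ Finset.range (2 * N), ((-1) ^ (i + 1) * a (i / 2)) • w i := by
  induction N with
  | zero => simp
  | succ N ih =>
    have hodd : (-1 : ℝ) ^ (2 * N + 1 + 1) * a ((2 * N + 1) / 2) = a N := by
      rw [Even.neg_one_pow ⟨N + 1, by ring⟩, show (2 * N + 1) / 2 = N by omega, one_mul]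
    have heven : (-1 : ℝ) ^ (2 * N + 1) * a (2 * N / 2) = -a N := by
      rw [Odd.neg_one_pow ⟨N, rfl⟩, show 2 * N / 2 = N by omega, neg_one_mul]
    rw [Finset.sum_range_succ, ih, show 2 * (N + 1) = 2 * N + 1 + 1 by ring,
      Finset.sum_range_succ, Finset.sum_range_succ, hodd, heven, smul_sub, neg_smul]
    abel

section BasisProjections

variable {X : Type*} [NormedAddCommGroup X] [NormedSpace ℝ X] {x : ℕ → X} {C : ℝ}

lemma norm_sum_filter_lt_le
    (hC : ∀ (a : ℕ → ℝ) (m n : ℕ), m ≤ n →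
      ‖∑ i ∈ Finset.range m, a i • x i‖ ≤ C * ‖∑ i ∈ Finset.range n, a i • x i‖)
    (b : ℕ → ℝ) (s : Finset ℕ) (m : ℕ) :
    ‖∑ i ∈ s with i < m, b i • x i‖ ≤ C * ‖∑ i ∈ s, b i • x i‖ := by
  classical
  obtain ⟨n, hsn⟩ := s.exists_nat_subset_range
  have hsum : ∀ k, ∑ i ∈ Finset.range k, (if i ∈ s then b i else 0) • x i =
      ∑ i ∈ s with i < k, b i • x i := by
    intro k
    simp only [ite_smul, zero_smul, ← Finset.sum_filter]
    congr 1
    ext i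
    simp [and_comm]
  have h := hC (fun i => if i ∈ s then b i else 0) m (max m n) (le_max_left _ _)
  rwa [hsum, hsum, Finset.filter_true_of_mem fun i hi =>
    lt_max_of_lt_right (Finset.mem_range.1 (hsn hi))] at h

lemma norm_smul_le_two_mul_norm_sum_of_mem
    (hC : ∀ (a : ℕ → ℝ) (m n : ℕ), m ≤ n →
      ‖∑ i ∈ Finset.range m, a i • x i‖ ≤ C * ‖∑ i ∈ Finset.range n, a i • x i‖)
    (b : ℕ → ℝ) {s : Finset ℕ} {j : ℕ} (hj : j ∈ s) :
    ‖b j • x j‖ ≤ 2 * C * ‖∑ i ∈ s, b i • x i‖ := by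
  have hfilter : s.filter (· < j + 1) = insert j (s.filter (· < j)) := by
    ext i
    simp only [Finset.mem_filter, Finset.mem_insert]
    grind
  have hsplit : b j • x j =
      ∑ i ∈ s with i < j + 1, b i • x i - ∑ i ∈ s with i < j, b i • x i := by
    rw [hfilter, Finset.sum_insert (by simp), add_sub_cancel_right]
  calc ‖b j • x j‖
      ≤ ‖∑ i ∈ s with i < j + 1, b i • x i‖ + ‖∑ i ∈ s with i < j, b i • x i‖ := by
        rw [hsplit]; exact norm_sub_le _ _
    _ ≤ C * ‖∑ i ∈ s, b i • x i‖ + C * ‖∑ i ∈ s, b i • x i‖ :=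
        add_le_add (norm_sum_filter_lt_le hC b s _) (norm_sum_filter_lt_le hC b s _)
    _ = 2 * C * ‖∑ i ∈ s, b i • x i‖ := by ring

lemma abs_coeff_le_norm_sum_pair_sub {c : ℝ}
    (hC : ∀ (a : ℕ → ℝ) (m n : ℕ), m ≤ n →
      ‖∑ i ∈ Finset.range m, a i • x i‖ ≤ C * ‖∑ i ∈ Finset.range n, a i • x i‖)
    (hc : 0 < c) (hcx : ∀ n, c ≤ ‖x n‖) {φ : ℕ → ℕ} (hφ : StrictMono φ)
    (a : ℕ → ℝ) {N j : ℕ} (hj : j < N) :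
    |a j| ≤ 2 * C / c * ‖∑ k ∈ Finset.range N, a k • (x (φ (2 * k + 1)) - x (φ (2 * k)))‖ := by
  set b := Function.extend φ (fun i => (-1) ^ (i + 1) * a (i / 2)) 0 with hb_def
  have hsum : ∑ k ∈ Finset.range N, a k • (x (φ (2 * k + 1)) - x (φ (2 * k))) =
      ∑ i ∈ (Finset.range (2 * N)).image φ, b i • x i := by
    rw [Finset.sum_image hφ.injective.injOn]
    refine (sum_range_smul_sub_eq a (fun i => x (φ i)) N).trans ?_
    simp only [hb_def, hφ.injective.extend_apply]
  have hb : b (φ (2 * j + 1)) = a j := by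
    rw [hb_def, hφ.injective.extend_apply, Even.neg_one_pow ⟨j + 1, by ring⟩,
      show (2 * j + 1) / 2 = j by omega, one_mul]
  have hmem : φ (2 * j + 1) ∈ (Finset.range (2 * N)).image φ :=
    Finset.mem_image_of_mem φ (Finset.mem_range.2 (by omega))
  have hcoeff := norm_smul_le_two_mul_norm_sum_of_mem hC b hmem
  rw [← hsum, hb, norm_smul, Real.norm_eq_abs] at hcoeff
  rw [div_mul_eq_mul_div, le_div_iff₀ hc]
  exact (mul_le_mul_of_nonneg_left (hcx _) (abs_nonneg _)).trans hcoeff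

end BasisProjections

lemma exists_strictMono_summable_norm_sub_pair {E : Type*} [SeminormedAddCommGroup E]
    {y : ℕ → E} {L : E} (hy : Tendsto y atTop (𝓝 L)) :
    ∃ φ : ℕ → ℕ, StrictMono φ ∧ Summable fun k => ‖y (φ (2 * k + 1)) - y (φ (2 * k))‖ := by
  obtain ⟨φ, hφ, hφL⟩ := extraction_forall_of_eventually fun n =>
    (tendsto_iff_norm_sub_tendsto_zero.1 hy).eventually
      (gt_mem_nhds (pow_pos (by norm_num : (0 : ℝ) < 1 / 2) n))
  refine ⟨φ, hφ, Summable.of_nonneg_of_le (fun _ => norm_nonneg _) (fun k => ?_)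
    (summable_geometric_two.mul_left 2)⟩
  have hpow : ∀ m, k ≤ m → ((1 : ℝ) / 2) ^ m ≤ (1 / 2) ^ k := fun m hm =>
    pow_le_pow_of_le_one (by norm_num) (by norm_num) hm
  calc ‖y (φ (2 * k + 1)) - y (φ (2 * k))‖
      ≤ ‖y (φ (2 * k + 1)) - L‖ + ‖L - y (φ (2 * k))‖ := norm_sub_le_norm_sub_add_norm_sub _ _ _
    _ ≤ 2 * (1 / 2) ^ k := by
        rw [norm_sub_rev L]
        linarith [hφL (2 * k + 1), hφL (2 * k), hpow (2 * k + 1) (by omega),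
          hpow (2 * k) (by omega)]

lemma exists_eq_sum_range_of_mem_span_range {R M : Type*} [Semiring R] [AddCommMonoid M]
    [Module R M] {z : ℕ → M} {v : M} (hv : v ∈ Submodule.span R (range z)) :
    ∃ (N : ℕ) (a : ℕ → R), v = ∑ k ∈ Finset.range N, a k • z k := by
  obtain ⟨a, rfl⟩ := Finsupp.mem_span_range_iff_exists_finsupp.1 hv
  obtain ⟨N, hN⟩ := a.support.exists_nat_subset_range
  exact ⟨N, a, Finsupp.sum_of_support_subset a hN _ fun _ _ => zero_smul R _⟩

theorem isCompactOperator_of_summable_norm_apply {E F : Type*} [NormedAddCommGroup E]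
    [NormedSpace ℝ E] [NormedAddCommGroup F] [NormedSpace ℝ F] [CompleteSpace F]
    (T : E →L[ℝ] F) {z : ℕ → E} (hz : Dense (Submodule.span ℝ (range z) : Set E)) {K : ℝ}
    (hK : ∀ (N : ℕ) (a : ℕ → ℝ), ∀ j < N, |a j| ≤ K * ‖∑ k ∈ Finset.range N, a k • z k‖)
    (hT : Summable fun k => ‖T (z k)‖) :
    IsCompactOperator T := by
  set R := |K|
  set Q : Set (ℕ → ℝ) := Set.pi univ fun _ => Icc (-R) R
  have hQ : IsCompact Q := isCompact_univ_pi fun _ => isCompact_Icc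
  set g : (ℕ → ℝ) → F := fun t => ∑' k, t k • T (z k)
  have hg : ContinuousOn g Q := by
    refine continuousOn_tsum (fun k => ((continuous_apply k).smul continuous_const).continuousOn)
      (hT.mul_left R) fun k t ht => ?_
    rw [norm_smul, Real.norm_eq_abs]
    exact mul_le_mul_of_nonneg_right (abs_le.2 (ht k (mem_univ k))) (norm_nonneg _)
  have hspan : T '' (ball 0 1 ∩ Submodule.span ℝ (range z)) ⊆ g '' Q := by
    rintro _ ⟨v, ⟨hv1, hv⟩, rfl⟩
    obtain ⟨N, a, rfl⟩ := exists_eq_sum_range_of_mem_span_range hv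
    have hvR : K * ‖∑ k ∈ Finset.range N, a k • z k‖ ≤ R := by
      rw [mem_ball_zero_iff] at hv1
      nlinarith [le_abs_self K, abs_nonneg K, norm_nonneg (∑ k ∈ Finset.range N, a k • z k)]
    refine ⟨fun k => if k < N then a k else 0, fun k _ => ?_, ?_⟩
    · show (if k < N then a k else 0) ∈ Icc (-R) R
      split_ifs with hk
      · exact abs_le.1 ((hK N a k hk).trans hvR)
      · exact ⟨by simp [R], by positivity⟩
    · show ∑' k, (if k < N then a k else 0) • T (z k) = _
      rw [tsum_eq_sum (s := Finset.range N) fun k hk => by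
          rw [if_neg (mt Finset.mem_range.2 hk), zero_smul]]
      simp only [map_sum, map_smul]
      exact Finset.sum_congr rfl fun k hk => by rw [if_pos (Finset.mem_range.1 hk)]
  refine (isCompactOperator_iff_exists_mem_nhds_image_subset_compact T).2
    ⟨ball 0 1, ball_mem_nhds 0 one_pos, g '' Q, hQ.image_of_continuousOn hg, ?_⟩
  calc T '' ball 0 1 ⊆ T '' closure (ball 0 1 ∩ Submodule.span ℝ (range z)) :=
        image_mono (hz.open_subset_closure_inter isOpen_ball)
    _ ⊆ closure (T '' (ball 0 1 ∩ Submodule.span ℝ (range z))) :=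
        image_closure_subset_closure_image T.continuous
    _ ⊆ g '' Q := closure_minimal hspan (hQ.image_of_continuousOn hg).isClosed

lemma dense_span_range_of_le_topologicalClosure {M : Type*} [NormedAddCommGroup M]
    [NormedSpace ℝ M] {W : Submodule ℝ M} (z : ℕ → W)
    (hW : W ≤ (Submodule.span ℝ (range fun k => (z k : M))).topologicalClosure) :
    Dense (Submodule.span ℝ (range z) : Set W) := by
  refine IsInducing.subtypeVal.dense_iff.2 fun w => ?_
  rw [← Submodule.coe_subtype, ← Submodule.map_coe, Submodule.map_span, ← range_comp,
    ← Submodule.topologicalClosure_coe]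
  exact hW w.2

theorem statement_4_general {X : Type*} [NormedAddCommGroup X] [NormedSpace ℝ X] [CompleteSpace X]
    (x : ℕ → X) (hxsn : IsSeminormalized x) (hxb : IsBasicSeq x)
    (S : ↥((Submodule.span ℝ (Set.range x)).topologicalClosure) →L[ℝ] X)
    (L : X)
    (hconv : Tendsto (fun n => S ⟨x n,
        Submodule.le_topologicalClosure _ (Submodule.subset_span (Set.mem_range_self n))⟩)
      atTop (nhds L)) :
    ∃ φ : ℕ → ℕ, StrictMono φ ∧
      ∀ h : ∀ v : X,
          v ∈ (Submodule.span ℝ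
              (Set.range fun k => x (φ (2 * k + 1)) - x (φ (2 * k)))).topologicalClosure →
          v ∈ (Submodule.span ℝ (Set.range x)).topologicalClosure,
        IsCompactOperator
          (fun w : ↥((Submodule.span ℝ
              (Set.range fun k => x (φ (2 * k + 1)) - x (φ (2 * k)))).topologicalClosure) =>
            S ⟨(w : X), h w w.2⟩) := by
  obtain ⟨c, _, hc, hcx⟩ := hxsn
  obtain ⟨-, C, -, hC⟩ := hxb
  obtain ⟨φ, hφ, hsum⟩ := exists_strictMono_summable_norm_sub_pair hconv
  refine ⟨φ, hφ, fun h => ?_⟩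
  let W :=
    (Submodule.span ℝ (range fun k => x (φ (2 * k + 1)) - x (φ (2 * k)))).topologicalClosure
  let z : ℕ → W := fun k => ⟨_, Submodule.le_topologicalClosure _
    (Submodule.subset_span (mem_range_self k))⟩
  let T : W →L[ℝ] X := S.comp (W.subtypeL.codRestrict _ fun w => h w w.2)
  refine isCompactOperator_of_summable_norm_apply T
    (dense_span_range_of_le_topologicalClosure z le_rfl) (K := 2 * C / c)
    (fun N a j hj => ?_) ?_
  · have := abs_coeff_le_norm_sum_pair_sub hC hc (fun n => (hcx n).1) hφ a hj
    simpa [Submodule.coe_sum] using this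
  · convert hsum using 2 with k
    rw [← map_sub]
    rfl

/-- Remark 1.3. -/
theorem statement_4 {X : Type*} [NormedAddCommGroup X] [NormedSpace ℝ X] [CompleteSpace X]
    -- X contains no unconditional basic sequence
    (hnu : ¬ ∃ u : ℕ → X, IsBasicSeq u ∧ IsUnconditionalSeq u)
    (x : ℕ → X) (hxsn : IsSeminormalized x) (hxb : IsBasicSeq x)
    (S : ↥((Submodule.span ℝ (Set.range x)).topologicalClosure) →L[ℝ] X)
    (L : X)
    (hconv : Tendsto (fun n => S ⟨x n,
        Submodule.le_topologicalClosure _ (Submodule.subset_span (Set.mem_range_self n))⟩)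
      atTop (nhds L)) :
    ∃ φ : ℕ → ℕ, StrictMono φ ∧
      ∀ h : ∀ v : X,
          v ∈ (Submodule.span ℝ
              (Set.range fun k => x (φ (2 * k + 1)) - x (φ (2 * k)))).topologicalClosure →
          v ∈ (Submodule.span ℝ (Set.range x)).topologicalClosure,
        IsCompactOperator
          (fun w : ↥((Submodule.span ℝ
              (Set.range fun k => x (φ (2 * k + 1)) - x (φ (2 * k)))).topologicalClosure) =>
            S ⟨(w : X), h w w.2⟩) :=
  statement_4_general x hxsn hxb S L hconv

end
end

section
/- Let X be a Banach space and for each i ∈ ℕ let (x_{i,j})_{j=i}^∞ be a seminormalized weakly null sequence in X. Then for every ε > 0 there exists a subarray (y_{i,j})_{(i,j)∈I} of (x_{i,j})_{(i,j)∈I} which is a regular array whose basis constant is at most 1 + ε. -/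
open Filter

noncomputable section

/-- The (strict) reverse lexicographic order on `ℕ × ℕ`. -/
def RLlt (p q : ℕ × ℕ) : Prop := p.2 < q.2 ∨ (p.2 = q.2 ∧ p.1 < q.1)

/-- An array in `X`: each row `(x i j)_{j ≥ i}` is a seminormalized weakly null sequence. -/
def IsArray {X : Type*} [NormedAddCommGroup X] [NormedSpace ℝ X] (x : ℕ → ℕ → X) : Prop :=
  ∀ i : ℕ,
    (∃ c C : ℝ, 0 < c ∧ ∀ j, i ≤ j → c ≤ ‖x i j‖ ∧ ‖x i j‖ ≤ C) ∧
    ∀ f : X →L[ℝ] ℝ, Tendsto (fun j => f (x i j)) atTop (nhds 0)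

/-- A regular array with basis constant at most `C`: the array, enumerated in the reverse
lexicographic order, is a basic sequence whose initial-segment projections have norm
at most `C`. -/
def IsRegularArrayWith {X : Type*} [NormedAddCommGroup X] [NormedSpace ℝ X]
    (C : ℝ) (x : ℕ → ℕ → X) : Prop :=
  IsArray x ∧ 1 ≤ C ∧
  ∀ s : Finset (ℕ × ℕ), (∀ q ∈ s, q.1 ≤ q.2) →
    ∀ (a : ℕ × ℕ → ℝ) (p : ℕ × ℕ),
      ‖∑ q ∈ s.filter (fun q => q.2 < p.2 ∨ (q.2 = p.2 ∧ q.1 ≤ p.1)), a q • x q.1 q.2‖ ≤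
        C * ‖∑ q ∈ s, a q • x q.1 q.2‖

/-- A regular array. -/
def IsRegularArray {X : Type*} [NormedAddCommGroup X] [NormedSpace ℝ X]
    (x : ℕ → ℕ → X) : Prop :=
  ∃ C : ℝ, IsRegularArrayWith C x

/-- `y` is a subarray of `x`. -/
def IsSubarrayOf {X : Type*} [NormedAddCommGroup X] (y x : ℕ → ℕ → X) : Prop :=
  ∃ h : ℕ → ℕ → ℕ,
    (∀ i j, i ≤ j → i ≤ h i j) ∧
    (∀ i j i' j', i ≤ j → i' ≤ j' → RLlt (i, j) (i', j') → RLlt (i, h i j) (i', h i' j')) ∧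
    ∀ i j, i ≤ j → y i j = x i (h i j)

/-- `f` has pattern `a` on `(k₀, F)` with respect to the array `x`: the values of `f` on
the `k₀`-th row of `x` along `F` (in increasing order) are exactly the entries of `a`. -/
def HasPatternOn {X : Type*} [NormedAddCommGroup X] [NormedSpace ℝ X]
    (x : ℕ → ℕ → X) (f : X →L[ℝ] ℝ) (k₀ : ℕ) (F : Finset ℕ) (a : List ℝ) : Prop :=
  (F.sort (· ≤ ·)).map (fun j => f (x k₀ j)) = a

/-!
Enumerate the index set `{(i, j) | i ≤ j}` in reverse lexicographic order as `q₀, q₁, …` and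
choose the columns one entry at a time, following Mazur's construction of basic sequences.
Finitely many functionals almost norm the span `V` of the vectors `u₀, …, uₙ₋₁` already
chosen; since the row of `qₙ` is weakly null and bounded below, a late enough entry `uₙ` of
that row is almost annihilated by them, whence `wₙ ‖v‖ ≤ wₙ₊₁ ‖v + t uₙ‖` for `v ∈ V`, for any
prescribed weights `1 ≤ w₀ < w₁ < ⋯ ≤ 1 + ε`. Telescoping these inequalities bounds every
initial-segment projection by `1 + ε`, and choosing the columns increasing makes the
result a subarray.
-/

/-- Position of `q` in the reverse lexicographic enumeration `(0, 0), (0, 1), (1, 1), (0, 2), …`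
of `{q | q.1 ≤ q.2}`. -/
def rlIndex (q : ℕ × ℕ) : ℕ := (q.2 + 1).choose 2 + q.1

lemma choose_two_succ_succ (n : ℕ) : (n + 2).choose 2 = (n + 1).choose 2 + (n + 1) := by
  rw [Nat.choose_succ_succ' (n + 1) 1, Nat.choose_one_right, add_comm]

lemma choose_two_add_lt_choose_two {a b : ℕ} (h : a < b) :
    (a + 1).choose 2 + a < (b + 1).choose 2 := by
  have hsucc := choose_two_succ_succ a
  have hmono := Nat.choose_le_choose 2 (show a + 2 ≤ b + 1 by omega)
  omega

lemma rlIndex_le_rlIndex_iff {p q : ℕ × ℕ} (hp : p.1 ≤ p.2) (hq : q.1 ≤ q.2) :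
    rlIndex p ≤ rlIndex q ↔ p.2 < q.2 ∨ p.2 = q.2 ∧ p.1 ≤ q.1 := by
  unfold rlIndex
  rcases lt_trichotomy p.2 q.2 with h | h | h
  · have := choose_two_add_lt_choose_two h
    omega
  · rw [h]
    omega
  · have := choose_two_add_lt_choose_two h
    omega

lemma rlIndex_lt_rlIndex {p q : ℕ × ℕ} (hp : p.1 ≤ p.2) (hq : q.1 ≤ q.2) (h : RLlt p q) :
    rlIndex p < rlIndex q := by
  rw [← not_le, rlIndex_le_rlIndex_iff hq hp]
  unfold RLlt at h
  omega

lemma rlIndex_injOn : Set.InjOn rlIndex {q | q.1 ≤ q.2} := fun p hp q hq h => by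
  have hpq := (rlIndex_le_rlIndex_iff hp hq).1 h.le
  have hqp := (rlIndex_le_rlIndex_iff hq hp).1 h.ge
  ext <;> omega

lemma exists_rlIndex_eq (n : ℕ) : ∃ q : ℕ × ℕ, q.1 ≤ q.2 ∧ rlIndex q = n := by
  induction n with
  | zero => exact ⟨(0, 0), le_rfl, rfl⟩
  | succ n ih =>
    obtain ⟨⟨i, j⟩, hij, rfl⟩ := ih
    obtain h | rfl : i < j ∨ i = j := hij.lt_or_eq
    · exact ⟨(i + 1, j), h, rfl⟩
    · refine ⟨(0, i + 1), (i + 1).zero_le, ?_⟩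
      simp only [rlIndex, choose_two_succ_succ]
      omega

lemma rlIndex_strictMono_snd (i : ℕ) : StrictMono fun j => rlIndex (i, j) := fun a b h => by
  have := choose_two_add_lt_choose_two h
  simp only [rlIndex]
  omega

def rlEnum (n : ℕ) : ℕ × ℕ := (exists_rlIndex_eq n).choose

lemma rlEnum_fst_le (n : ℕ) : (rlEnum n).1 ≤ (rlEnum n).2 := (exists_rlIndex_eq n).choose_spec.1

@[simp]
lemma rlIndex_rlEnum (n : ℕ) : rlIndex (rlEnum n) = n := (exists_rlIndex_eq n).choose_spec.2

lemma rlEnum_rlIndex {q : ℕ × ℕ} (hq : q.1 ≤ q.2) : rlEnum (rlIndex q) = q :=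
  rlIndex_injOn (rlEnum_fst_le _) hq (rlIndex_rlEnum _)

section Mazur

variable {X : Type*} [NormedAddCommGroup X] [NormedSpace ℝ X]

/-- Adding `u n` to the span of its predecessors shrinks norms at most by the factor
`w n / w (n + 1)`; for weights in `[1, C]` this makes `u` basic with constant at most `C`. -/
def IsWeightedBasic (w : ℕ → ℝ) (u : ℕ → X) : Prop :=
  ∀ n, ∀ v ∈ Submodule.span ℝ (u '' Set.Iio n), ∀ t : ℝ, w n * ‖v‖ ≤ w (n + 1) * ‖v + t • u n‖

lemma exists_finset_almost_norming (V : Submodule ℝ X) [FiniteDimensional ℝ V] {η : ℝ}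
    (hη : 0 < η) :
    ∃ Φ : Finset (X →L[ℝ] ℝ), (∀ f ∈ Φ, ‖f‖ ≤ 1) ∧ ∀ v ∈ V, ∃ f ∈ Φ, (1 - η) * ‖v‖ ≤ f v := by
  classical
  choose g hg_norm hg_apply using fun y : X => exists_dual_vector'' ℝ y
  simp only [RCLike.ofReal_real_eq_id, id] at hg_apply
  obtain ⟨t, ht_sphere, ht_fin, ht_cover⟩ := Metric.finite_approx_of_totallyBounded
    (isCompact_sphere (0 : V) 1).totallyBounded η hη
  refine ⟨insert 0 (ht_fin.toFinset.image fun y : V => g y), ?_, fun v hv => ?_⟩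
  · simp only [Finset.mem_insert, Finset.mem_image]
    rintro f (rfl | ⟨y, -, rfl⟩)
    exacts [by simp, hg_norm y]
  rcases eq_or_ne v 0 with rfl | hv0
  · exact ⟨0, Finset.mem_insert_self _ _, by simp⟩
  set w : V := ‖v‖⁻¹ • ⟨v, hv⟩
  have hw : w ∈ Metric.sphere (0 : V) 1 := by
    simp [w, norm_smul, hv0]
  have hw_norm : ‖(w : X)‖ = 1 := by simpa using hw
  obtain ⟨y, hy, hwy⟩ := Set.mem_iUnion₂.1 (ht_cover hw)
  have hy_norm : ‖(y : X)‖ = 1 := by simpa using ht_sphere hy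
  refine ⟨g y, Finset.mem_insert_of_mem (Finset.mem_image_of_mem _ (ht_fin.mem_toFinset.2 hy)),
    ?_⟩
  have hgw : 1 - η ≤ g y w := by
    have hdiff : |g y ((w : X) - y)| ≤ η := by
      calc |g y ((w : X) - y)| ≤ ‖g y‖ * ‖(w : X) - y‖ := (g y).le_opNorm _
        _ ≤ 1 * η := by
          gcongr
          exacts [hg_norm y, by simpa [dist_eq_norm] using (Metric.mem_ball.1 hwy).le]
        _ = η := one_mul η
    have hsplit : g y w = g y y + g y ((w : X) - y) := by rw [← map_add, add_sub_cancel]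
    rw [hsplit, hg_apply, hy_norm]
    linarith [neg_abs_le (g y ((w : X) - y))]
  have hv_eq : v = ‖v‖ • (w : X) := by
    simp [w, smul_smul, hv0]
  rw [hv_eq, map_smul, smul_eq_mul, norm_smul, norm_norm, hw_norm, mul_one, mul_comm]
  exact mul_le_mul_of_nonneg_left hgw (norm_nonneg v)

/-- Mazur's lemma. -/
lemma exists_ge_one_sub_mul_norm_le_norm_add_smul (V : Submodule ℝ X) [FiniteDimensional ℝ V]
    {u : ℕ → X} {c : ℝ} (hc : 0 < c) (hu : ∀ᶠ j in atTop, c ≤ ‖u j‖)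
    (hnull : ∀ f : X →L[ℝ] ℝ, Tendsto (fun j => f (u j)) atTop (nhds 0))
    {η : ℝ} (hη : 0 < η) (N : ℕ) :
    ∃ m ≥ N, ∀ v ∈ V, ∀ t : ℝ, (1 - η) * ‖v‖ ≤ ‖v + t • u m‖ := by
  obtain ⟨Φ, hΦ_norm, hΦ⟩ := exists_finset_almost_norming V (show 0 < η / 3 by positivity)
  have hsmall : ∀ᶠ j in atTop, ∀ f ∈ Φ, |f (u j)| < c * (η / 3) := by
    refine (Φ.eventually_all).2 fun f _ => ?_
    have hlim := (hnull f).abs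
    rw [abs_zero] at hlim
    exact hlim.eventually_lt_const (by positivity)
  obtain ⟨m, hmN, hmc, hm⟩ := ((eventually_ge_atTop N).and (hu.and hsmall)).exists
  refine ⟨m, hmN, fun v hv t => ?_⟩
  by_cases ht : 2 * ‖v‖ ≤ |t| * c
  · have hle : |t| * c ≤ ‖v + t • u m‖ + ‖v‖ :=
      calc |t| * c ≤ ‖t • u m‖ := by
            rw [norm_smul, Real.norm_eq_abs]
            exact mul_le_mul_of_nonneg_left hmc (abs_nonneg t)
        _ = ‖(v + t • u m) - v‖ := by rw [add_sub_cancel_left]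
        _ ≤ ‖v + t • u m‖ + ‖v‖ := norm_sub_le _ _
    nlinarith [norm_nonneg v]
  · obtain ⟨f, hfΦ, hfv⟩ := hΦ v hv
    have hfu : |t| * |f (u m)| ≤ |t| * (c * (η / 3)) :=
      mul_le_mul_of_nonneg_left (hm f hfΦ).le (abs_nonneg t)
    have hf_le : f (v + t • u m) ≤ ‖v + t • u m‖ :=
      calc f (v + t • u m) ≤ ‖f‖ * ‖v + t • u m‖ := (le_abs_self _).trans (f.le_opNorm _)
        _ ≤ ‖v + t • u m‖ := mul_le_of_le_one_left (norm_nonneg _) (hΦ_norm f hfΦ)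
    rw [map_add, map_smul, smul_eq_mul] at hf_le
    nlinarith [neg_abs_le (t * f (u m)), abs_mul t (f (u m))]

lemma IsWeightedBasic.monotone_mul_norm_sum_range {u : ℕ → X} {w : ℕ → ℝ}
    (hu : IsWeightedBasic w u) (b : ℕ → ℝ) :
    Monotone fun n => w n * ‖∑ k ∈ Finset.range n, b k • u k‖ := by
  refine monotone_nat_of_le_succ fun n => ?_
  rw [Finset.sum_range_succ]
  exact hu n _ (Submodule.sum_mem _ fun k hk => Submodule.smul_mem _ _
    (Submodule.subset_span ⟨k, Finset.mem_range.1 hk, rfl⟩)) (b n)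

end Mazur

lemma exists_strictMono_forall_of_exists_ge (P : ℕ → (ℕ → ℕ) → ℕ → Prop)
    (hP : ∀ n c c' m, (∀ k < n, c k = c' k) → P n c m → P n c' m)
    (hex : ∀ n c N, ∃ m ≥ N, P n c m) :
    ∃ c : ℕ → ℕ, StrictMono c ∧ ∀ n, P n c (c n) := by
  choose Φ hΦ_ge hΦ using hex
  let c : ℕ → ℕ := Nat.strongRec (motive := fun _ => ℕ) fun n prev =>
    let pre : ℕ → ℕ := fun k => if hk : k < n then prev k hk else 0
    Φ n pre ((Finset.range n).sup fun k => pre k + 1)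
  let before (n : ℕ) : ℕ → ℕ := fun k => if k < n then c k else 0
  have hc : ∀ n, c n = Φ n (before n) ((Finset.range n).sup fun k => before n k + 1) := by
    intro n
    simp only [c, before]
    rw [Nat.strongRec_eq]
    simp only [dite_eq_ite]
  have hlt : ∀ k n, k < n → c k < c n := by
    intro k n hkn
    have hsup := Finset.le_sup (f := fun k => before n k + 1) (Finset.mem_range.2 hkn)
    have hge := hΦ_ge n (before n) ((Finset.range n).sup fun k => before n k + 1)
    have hbefore : before n k = c k := if_pos hkn
    rw [hc n]
    omega
  refine ⟨c, fun k n => hlt k n, fun n => ?_⟩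
  refine hP n (before n) c (c n) (fun k hk => if_pos hk) ?_
  rw [hc n]
  exact hΦ _ _ _

lemma sum_eq_sum_range_rlEnum {M : Type*} [AddCommMonoid M] {s T : Finset (ℕ × ℕ)}
    (hs : ∀ q ∈ s, q.1 ≤ q.2) (hTs : T ⊆ s) {N : ℕ} (hT : ∀ q ∈ s, q ∈ T ↔ rlIndex q < N)
    (f : ℕ × ℕ → M) :
    ∑ q ∈ T, f q = ∑ k ∈ Finset.range N, if rlEnum k ∈ s then f (rlEnum k) else 0 := by
  rw [← Finset.sum_filter]
  refine Finset.sum_nbij' rlIndex rlEnum (fun q hq => ?_) (fun k hk => ?_)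
    (fun q hq => rlEnum_rlIndex (hs q (hTs hq))) (fun k _ => rlIndex_rlEnum k)
    (fun q hq => by rw [rlEnum_rlIndex (hs q (hTs hq))])
  · rw [Finset.mem_filter, Finset.mem_range, rlEnum_rlIndex (hs q (hTs hq))]
    exact ⟨(hT q (hTs hq)).1 hq, hTs hq⟩
  · rw [Finset.mem_filter, Finset.mem_range] at hk
    exact (hT _ hk.2).2 (by rw [rlIndex_rlEnum]; exact hk.1)

lemma isSubarrayOf_comp_rlIndex {X : Type*} [NormedAddCommGroup X] {x : ℕ → ℕ → X}
    {c : ℕ → ℕ} (hc : StrictMono c) (hrow : ∀ n, (rlEnum n).1 ≤ c n) :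
    IsSubarrayOf (fun i j => x i (c (rlIndex (i, j)))) x := by
  refine ⟨fun i j => c (rlIndex (i, j)), fun i j hij => ?_,
    fun i j i' j' hij hij' h => Or.inl (hc (rlIndex_lt_rlIndex hij hij' h)), fun _ _ _ => rfl⟩
  simpa [rlEnum_rlIndex (show (i, j).1 ≤ (i, j).2 from hij)] using hrow (rlIndex (i, j))

section Array

variable {X : Type*} [NormedAddCommGroup X] [NormedSpace ℝ X]

lemma IsArray.exists_strictMono_isWeightedBasic {x : ℕ → ℕ → X} (hx : IsArray x) {w : ℕ → ℝ}
    (hw : ∀ n, 0 < w n) (hw_mono : StrictMono w) :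
    ∃ c : ℕ → ℕ, StrictMono c ∧ (∀ n, (rlEnum n).1 ≤ c n) ∧
      IsWeightedBasic w fun k => x (rlEnum k).1 (c k) := by
  refine (exists_strictMono_forall_of_exists_ge
    (fun n c m => (rlEnum n).1 ≤ m ∧
      ∀ v ∈ Submodule.span ℝ ((fun k => x (rlEnum k).1 (c k)) '' Set.Iio n), ∀ t : ℝ,
        w n * ‖v‖ ≤ w (n + 1) * ‖v + t • x (rlEnum n).1 m‖)
    (fun n c c' m hcc' hm => ⟨hm.1, by
      rw [← Set.image_congr (f := fun k => x (rlEnum k).1 (c k)) fun k hk => by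
        rw [hcc' k hk]]
      exact hm.2⟩) ?_).imp
    fun c ⟨hc, hgood⟩ => ⟨hc, fun n => (hgood n).1, fun n => (hgood n).2⟩
  intro n c N
  obtain ⟨lo, _, hlo, hbound⟩ := (hx (rlEnum n).1).1
  set V := Submodule.span ℝ ((fun k => x (rlEnum k).1 (c k)) '' Set.Iio n)
  have : FiniteDimensional ℝ V := FiniteDimensional.span_of_finite ℝ ((Set.finite_Iio n).image _)
  obtain ⟨m, hm, hmazur⟩ := exists_ge_one_sub_mul_norm_le_norm_add_smul V hlo
    (eventually_atTop.2 ⟨_, fun j hj => (hbound j hj).1⟩) (hx (rlEnum n).1).2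
    (sub_pos.2 ((div_lt_one (hw (n + 1))).2 (hw_mono n.lt_succ_self))) (max N (rlEnum n).1)
  refine ⟨m, le_of_max_le_left hm, le_of_max_le_right hm, fun v hv t => ?_⟩
  have h := mul_le_mul_of_nonneg_left (hmazur v hv t) (hw (n + 1)).le
  rwa [sub_sub_cancel, ← mul_assoc, mul_div_cancel₀ _ (hw (n + 1)).ne'] at h

variable {x : ℕ → ℕ → X} {c : ℕ → ℕ}

lemma IsArray.comp_rlIndex (hx : IsArray x) (hc : StrictMono c)
    (hrow : ∀ n, (rlEnum n).1 ≤ c n) : IsArray fun i j => x i (c (rlIndex (i, j))) := by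
  intro i
  obtain ⟨⟨lo, hi, hlo, hbound⟩, hnull⟩ := hx i
  refine ⟨⟨lo, hi, hlo, fun j hij => hbound _ ?_⟩, fun f => ?_⟩
  · simpa [rlEnum_rlIndex (show (i, j).1 ≤ (i, j).2 from hij)] using hrow (rlIndex (i, j))
  · exact (hnull f).comp (hc.comp (rlIndex_strictMono_snd i)).tendsto_atTop

lemma isRegularArrayWith_of_isWeightedBasic {y : ℕ → ℕ → X} (hy : IsArray y) {w : ℕ → ℝ}
    {C : ℝ} (hw_one : ∀ n, 1 ≤ w n) (hw_le : ∀ n, w n ≤ C)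
    (hbasic : IsWeightedBasic w fun k => y (rlEnum k).1 (rlEnum k).2) :
    IsRegularArrayWith C y := by
  classical
  refine ⟨hy, (hw_one 0).trans (hw_le 0), fun s hs a p => ?_⟩
  set b : ℕ → ℝ := fun k => if rlEnum k ∈ s then a (rlEnum k) else 0
  have hsum : ∀ T ⊆ s, ∀ N, (∀ q ∈ s, q ∈ T ↔ rlIndex q < N) →
      ∑ q ∈ T, a q • y q.1 q.2 =
        ∑ k ∈ Finset.range N, b k • y (rlEnum k).1 (rlEnum k).2 := by
    intro T hTs N hT
    rw [sum_eq_sum_range_rlEnum hs hTs hT]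
    exact Finset.sum_congr rfl fun k _ => by simp only [b, ite_smul, zero_smul]
  -- `p` need not lie in the index set; `(min p.1 p.2, p.2)` is the last index not after it.
  set M := rlIndex (min p.1 p.2, p.2) + 1
  set N := max M (s.sup rlIndex + 1)
  have hinit := hsum _ (Finset.filter_subset (fun q => q.2 < p.2 ∨ q.2 = p.2 ∧ q.1 ≤ p.1) s) M
    fun q hq => by
    rw [Finset.mem_filter, Nat.lt_succ_iff,
      rlIndex_le_rlIndex_iff (hs q hq) (show min p.1 p.2 ≤ p.2 from min_le_right _ _)]
    have := hs q hq
    simp only [hq, true_and]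
    omega
  have hall := hsum s subset_rfl N fun q hq =>
    ⟨fun _ => (Nat.lt_succ_of_le (Finset.le_sup hq)).trans_le (le_max_right _ _),
      fun _ => hq⟩
  rw [hinit, hall]
  calc _ ≤ w M * ‖∑ k ∈ Finset.range M, b k • y (rlEnum k).1 (rlEnum k).2‖ :=
        le_mul_of_one_le_left (norm_nonneg _) (hw_one M)
    _ ≤ w N * ‖∑ k ∈ Finset.range N, b k • y (rlEnum k).1 (rlEnum k).2‖ :=
        hbasic.monotone_mul_norm_sum_range b (le_max_left _ _)
    _ ≤ C * _ := mul_le_mul_of_nonneg_right (hw_le N) (norm_nonneg _)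

end Array

lemma exists_strictMono_one_le_le_one_add {ε : ℝ} (hε : 0 < ε) :
    ∃ w : ℕ → ℝ, (∀ n, 1 ≤ w n) ∧ (∀ n, w n ≤ 1 + ε) ∧ StrictMono w := by
  have hhalf : (0 : ℝ) < 2⁻¹ := by norm_num
  refine ⟨fun n => 1 + ε * (1 - 2⁻¹ ^ n), fun n => ?_, fun n => ?_,
    strictMono_nat_of_lt_succ fun n => ?_⟩
  · exact le_add_of_nonneg_right
      (mul_nonneg hε.le (sub_nonneg.2 (pow_le_one₀ hhalf.le (by norm_num))))
  · exact add_le_add_right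
      (mul_le_of_le_one_right hε.le (sub_le_self _ (pow_nonneg hhalf.le n))) 1
  · exact add_lt_add_right (mul_lt_mul_of_pos_left (sub_lt_sub_left
      (pow_lt_pow_right_of_lt_one₀ hhalf (by norm_num) n.lt_succ_self) 1) hε) 1

theorem statement_5_general {X : Type*} [NormedAddCommGroup X] [NormedSpace ℝ X]
    (x : ℕ → ℕ → X) (hx : IsArray x) (ε : ℝ) (hε : 0 < ε) :
    ∃ y : ℕ → ℕ → X, IsSubarrayOf y x ∧ IsRegularArrayWith (1 + ε) y := by
  obtain ⟨w, hw_one, hw_le, hw_mono⟩ := exists_strictMono_one_le_le_one_add hε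
  obtain ⟨c, hc, hc_row, hc_basic⟩ :=
    hx.exists_strictMono_isWeightedBasic (fun n => one_pos.trans_le (hw_one n)) hw_mono
  refine ⟨_, isSubarrayOf_comp_rlIndex hc hc_row,
    isRegularArrayWith_of_isWeightedBasic (hx.comp_rlIndex hc hc_row) hw_one hw_le ?_⟩
  simpa using hc_basic

/-- Remark 2.3. -/
theorem statement_5 {X : Type*} [NormedAddCommGroup X] [NormedSpace ℝ X] [CompleteSpace X]
    (x : ℕ → ℕ → X) (hx : IsArray x) (ε : ℝ) (hε : 0 < ε) :
    ∃ y : ℕ → ℕ → X, IsSubarrayOf y x ∧ IsRegularArrayWith (1 + ε) y :=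
  statement_5_general x hx ε hε

end
end

section
/- Let (x_{i,j})_{(i,j)∈I} be a regular array in a Banach space X, let a⃗ be a p-pattern, let 𝓕 ⊆ 2Ba(X*), let δ > 0, and let i₀, j₀, k₀ ∈ ℕ with j₀ ≥ i₀. Then there exists a subarray (y_{i,j})_{(i,j)∈I} of (x_{i,j})_{(i,j)∈I} such that for every F ⊆ {k₀, k₀+1, k₀+2, …} with (i₀,j₀) <_{rℓ} (k₀, min F) and |F| = p the following holds: if there exists f ∈ 𝓕 having pattern a⃗ on (k₀,F) with respect to (y_{i,j})_{(i,j)∈I}, then there exists g ∈ 𝓕 having pattern a⃗ on (k₀,F) with respect to (y_{i,j})_{(i,j)∈I} and satisfying |g(y_{i₀,j₀})| < δ. Moreover, (y_{i,j}) can be chosen so that y_{i,j} = x_{i,j} for all (i,j) <_{rℓ} (i₀,j₀). -/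
/-!
Row `i₀` is weakly null and the functionals in `𝓕` lie in a weak* compact ball. Call a set `G` of
`p` columns bad for a column `n` if some `f ∈ 𝓕` has pattern `a` on `(k₀, G)` but every such `f`
satisfies `|f (x i₀ n)| ≥ δ`. If for every `n ≥ j₀` every infinite set of later columns contained a
bad `G`, Ramsey's theorem and a diagonal argument would give columns `n₀ < n₁ < ⋯` and functionals
`f_k ∈ 𝓕` with `|f_k (x i₀ n_t)| ≥ δ` for all `t ≤ k`; a weak* cluster point of `(f_k)` would then
stay `δ`-large along `x i₀ n_t`, contradicting weak nullity. So some `n ≥ j₀` and infinite `M` of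
later columns have no bad `G`, and the subarray keeps `x` before `(i₀, j₀)`, puts column `n` at
`(i₀, j₀)` and runs through `M` afterwards.
-/

open Filter

noncomputable section

open Set

theorem Set.Infinite.exists_strictMono_diagonal {S : Set ℕ} (hS : S.Infinite)
    {P : ℕ → Set ℕ → Prop}
    (step : ∀ a ∈ S, ∀ T : Set ℕ, T.Infinite → ∃ M ⊆ T, M.Infinite ∧ P a M) :
    ∃ (a : ℕ → ℕ) (N : ℕ → Set ℕ), StrictMono a ∧ (∀ t, a t ∈ S) ∧ (∀ t, P (a t) (N t)) ∧
      ∀ t u, t < u → a u ∈ N t := by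
  have next (T : {T : Set ℕ // T.Infinite ∧ T ⊆ S}) : ∃ M : {T : Set ℕ // T.Infinite ∧ T ⊆ S},
      M.1 ⊆ T.1 \ Iic (sInf T.1) ∧ P (sInf T.1) M.1 := by
    obtain ⟨M, hMT, hM, hP⟩ := step _ (T.2.2 (Nat.sInf_mem T.2.1.nonempty)) _
      (T.2.1.sdiff (finite_Iic (sInf T.1)))
    exact ⟨⟨M, hM, hMT.trans (sdiff_subset.trans T.2.2)⟩, hMT, hP⟩
  choose next hnext using next
  let seq (t : ℕ) : {T : Set ℕ // T.Infinite ∧ T ⊆ S} := next^[t] ⟨S, hS, subset_rfl⟩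
  let T (t : ℕ) : Set ℕ := (seq t).1
  have hT_succ (t : ℕ) : T (t + 1) ⊆ T t \ Iic (sInf (T t)) ∧ P (sInf (T t)) (T (t + 1)) := by
    simp only [T, seq, Function.iterate_succ_apply']
    exact hnext _
  have hmem (t : ℕ) : sInf (T t) ∈ T t := Nat.sInf_mem (seq t).2.1.nonempty
  have hanti : Antitone T := antitone_nat_of_succ_le fun t => (hT_succ t).1.trans sdiff_subset
  have habove (t : ℕ) : ∀ m ∈ T (t + 1), sInf (T t) < m := fun m hm => by
    simpa using ((hT_succ t).1 hm).2
  exact ⟨fun t => sInf (T t), fun t => T (t + 1),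
    strictMono_nat_of_lt_succ fun t => habove t _ (hmem _), fun t => (seq t).2.2 (hmem t),
    fun t => (hT_succ t).2, fun t u htu => hanti htu (hmem u)⟩

theorem Set.Infinite.exists_infinite_subset_homogeneous {κ : Type*} [Finite κ] {S : Set ℕ}
    (hS : S.Infinite) (p : ℕ) (c : Finset ℕ → κ) :
    ∃ M ⊆ S, M.Infinite ∧ ∃ k, ∀ G : Finset ℕ, ↑G ⊆ M → G.card = p → c G = k := by
  induction p generalizing S c with
  | zero => exact ⟨S, subset_rfl, hS, c ∅, fun G _ hG => by rw [Finset.card_eq_zero.1 hG]⟩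
  | succ p ih =>
    obtain ⟨a, N, ha, haS, hN, haN⟩ := hS.exists_strictMono_diagonal
      (P := fun a M => ∃ k, ∀ G : Finset ℕ, ↑G ⊆ M → G.card = p → c (insert a G) = k)
      fun a _ T hT => ih hT fun G => c (insert a G)
    choose k hk using hN
    obtain ⟨k₀, hk₀⟩ := Finite.exists_infinite_fiber k
    refine ⟨a '' (k ⁻¹' {k₀}), image_subset_iff.2 fun t _ => haS t,
      (Set.infinite_coe_iff.1 hk₀).image ha.injective.injOn, k₀, fun G hG hcard => ?_⟩
    have hne : G.Nonempty := Finset.card_pos.1 (by omega)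
    obtain ⟨t, ht, hat⟩ := hG (G.min'_mem hne)
    have hmem : a t ∈ G := hat ▸ G.min'_mem hne
    have hrest : ↑(G.erase (a t)) ⊆ N t := by
      intro m hm
      obtain ⟨hmt, hmG⟩ := Finset.mem_erase.1 hm
      obtain ⟨u, -, rfl⟩ := hG hmG
      have hlt : a t < a u := hat ▸ (G.min'_le _ hmG).lt_of_ne (hat ▸ hmt.symm)
      exact haN t u (ha.lt_iff_lt.1 hlt)
    have hcard' : (G.erase (a t)).card = p := by rw [Finset.card_erase_of_mem hmem, hcard]; rfl
    rw [← Finset.insert_erase hmem, hk t _ hrest hcard', show k t = k₀ from ht]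

theorem exists_forall_le_abs_apply_of_eventually {X ι κ : Type*} [NormedAddCommGroup X]
    [NormedSpace ℝ X] {l : Filter κ} [l.NeBot] {f : κ → X →L[ℝ] ℝ} {r : ℝ} (hf : ∀ k, ‖f k‖ ≤ r)
    {v : ι → X} {δ : ℝ} (h : ∀ t, ∀ᶠ k in l, δ ≤ |f k (v t)|) :
    ∃ ψ : X →L[ℝ] ℝ, ∀ t, δ ≤ |ψ (v t)| := by
  have hball : map (fun k => StrongDual.toWeakDual (f k)) l ≤
      𝓟 (WeakDual.toStrongDual ⁻¹' Metric.closedBall 0 r) :=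
    le_principal_iff.2 (mem_map.2 (univ_mem' fun k => by simpa using hf k))
  obtain ⟨φ, -, hφ⟩ :=
    (WeakDual.isCompact_closedBall (0 : StrongDual ℝ X) r).exists_mapClusterPt hball
  refine ⟨WeakDual.toStrongDual φ, fun t => ?_⟩
  exact (isClosed_le continuous_const continuous_abs).mem_of_mapClusterPt
    (hφ.continuousAt_comp (WeakDual.eval_continuous (v t)).continuousAt) (h t)

theorem exists_infinite_forall_exists_abs_apply_lt {X : Type*} [NormedAddCommGroup X]
    [NormedSpace ℝ X] {z : ℕ → X} (hz : ∀ f : X →L[ℝ] ℝ, Tendsto (fun j => f (z j)) atTop (nhds 0))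
    (W : Finset ℕ → Set (X →L[ℝ] ℝ)) {r : ℝ} (hW : ∀ G, ∀ f ∈ W G, ‖f‖ ≤ r)
    {δ : ℝ} (hδ : 0 < δ) (p j₀ : ℕ) :
    ∃ n, j₀ ≤ n ∧ ∃ M : Set ℕ, M.Infinite ∧ (∀ m ∈ M, n < m) ∧
      ∀ G : Finset ℕ, ↑G ⊆ M → G.card = p → (W G).Nonempty → ∃ g ∈ W G, |g (z n)| < δ := by
  by_contra! hcon
  let Bad : ℕ → Finset ℕ → Prop := fun n G => (W G).Nonempty ∧ ∀ g ∈ W G, δ ≤ |g (z n)|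
  have step : ∀ n ∈ Ici j₀, ∀ T : Set ℕ, T.Infinite →
      ∃ M ⊆ T, M.Infinite ∧ ∀ G : Finset ℕ, ↑G ⊆ M → G.card = p → Bad n G := by
    intro n hn T hT
    obtain ⟨M, hMT, hM, k, hk⟩ :=
      (hT.sdiff (finite_Iic n)).exists_infinite_subset_homogeneous p (Bad n)
    -- `M` is homogeneous for `Bad n`, and by `hcon` it contains a bad set
    obtain ⟨G', hG', hcard', hbad⟩ := hcon n hn M hM fun m hm => by simpa using (hMT hm).2
    refine ⟨M, hMT.trans sdiff_subset, hM, fun G hG hcard => ?_⟩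
    rwa [hk G hG hcard, ← hk G' hG' hcard']
  obtain ⟨a, N, ha, -, hN, haN⟩ := (Ici_infinite j₀).exists_strictMono_diagonal step
  let G : ℕ → Finset ℕ := fun k => (Finset.Ioc k (k + p)).map ⟨a, ha.injective⟩
  have hG_card (k : ℕ) : (G k).card = p := by simp [G]
  have hG_sub {t k : ℕ} (htk : t ≤ k) : ↑(G k) ⊆ N t := by
    intro m hm
    obtain ⟨u, hu, rfl⟩ := Finset.mem_map.1 hm
    exact haN t u (htk.trans_lt (Finset.mem_Ioc.1 hu).1)
  choose f hf using fun k => (hN k (G k) (hG_sub le_rfl) (hG_card k)).1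
  obtain ⟨ψ, hψ⟩ := exists_forall_le_abs_apply_of_eventually (l := atTop)
    (fun k => hW _ _ (hf k)) (v := fun t => z (a t)) fun t =>
      eventually_atTop.2 ⟨t, fun k htk => (hN t (G k) (hG_sub htk) (hG_card k)).2 _ (hf k)⟩
  obtain ⟨t, ht⟩ := (((hz ψ).comp ha.tendsto_atTop).abs.eventually_lt_const
    (by simpa using hδ)).exists
  exact (hψ t).not_gt ht

section Subarray

instance (p q : ℕ × ℕ) : Decidable (RLlt p q) := inferInstanceAs (Decidable (_ ∨ _))

def subarrayColumn (i₀ j₀ n : ℕ) (τ : ℕ → ℕ) (i j : ℕ) : ℕ :=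
  if RLlt (i, j) (i₀, j₀) then j else if i = i₀ ∧ j = j₀ then n else τ j

variable {i₀ j₀ n : ℕ} {τ : ℕ → ℕ}

theorem subarrayColumn_of_rlLt {i j : ℕ} (h : RLlt (i, j) (i₀, j₀)) :
    subarrayColumn i₀ j₀ n τ i j = j := by
  simp [subarrayColumn, h]

theorem subarrayColumn_self : subarrayColumn i₀ j₀ n τ i₀ j₀ = n := by
  simp [subarrayColumn, RLlt]

theorem subarrayColumn_of_rlLt_right {i j : ℕ} (h : RLlt (i₀, j₀) (i, j)) :
    subarrayColumn i₀ j₀ n τ i j = τ j := by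
  unfold subarrayColumn
  split_ifs <;> simp only [RLlt] at * <;> omega

theorem isSubarrayOf_subarrayColumn {X : Type*} [NormedAddCommGroup X] (x : ℕ → ℕ → X)
    (hτ : StrictMono τ) (hij : i₀ ≤ j₀) (hn : j₀ ≤ n) (hnτ : n < τ j₀) :
    IsSubarrayOf (fun i j => x i (subarrayColumn i₀ j₀ n τ i j)) x := by
  refine ⟨subarrayColumn i₀ j₀ n τ, fun i j hij' => ?_, fun i j i' j' _ _ hlt => ?_,
    fun _ _ _ => rfl⟩
  · have : j ≤ τ j := hτ.id_le j
    unfold subarrayColumn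
    split_ifs <;> simp only [RLlt] at * <;> omega
  · have hτjj' := hτ.lt_iff_lt (a := j) (b := j')
    have hτj'j := hτ.lt_iff_lt (a := j') (b := j)
    have hτj := hτ.monotone (a := j₀) (b := j)
    have hτj' := hτ.monotone (a := j₀) (b := j')
    unfold subarrayColumn
    split_ifs <;> simp only [RLlt] at * <;> omega

theorem hasPatternOn_iff_image {X : Type*} [NormedAddCommGroup X] [NormedSpace ℝ X]
    {x y : ℕ → ℕ → X} (hτ : StrictMono τ) {f : X →L[ℝ] ℝ} {k₀ : ℕ} {F : Finset ℕ} {a : List ℝ}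
    (hy : ∀ m ∈ F, y k₀ m = x k₀ (τ m)) :
    HasPatternOn y f k₀ F a ↔ HasPatternOn x f k₀ (F.image τ) a := by
  rw [HasPatternOn, HasPatternOn, show F.image τ = F.map ⟨τ, hτ.injective⟩ from
    (F.map_eq_image ⟨τ, hτ.injective⟩).symm,
    ← StrictMonoOn.map_finsetSort _ _ (hτ.strictMonoOn _), List.map_map]
  refine iff_of_eq (congrArg (· = a) (List.map_congr_left fun m hm => ?_))
  simp [hy m ((F.mem_sort _).1 hm)]

end Subarray

theorem statement_6_general {X : Type*} [NormedAddCommGroup X] [NormedSpace ℝ X]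
    (x : ℕ → ℕ → X) (hx : IsRegularArray x)
    (a : List ℝ)
    (𝓕 : Set (X →L[ℝ] ℝ)) (h𝓕 : ∀ f ∈ 𝓕, ‖f‖ ≤ 2)
    (δ : ℝ) (hδ : 0 < δ) (i₀ j₀ k₀ : ℕ) (hij : i₀ ≤ j₀) :
    ∃ y : ℕ → ℕ → X, IsSubarrayOf y x ∧
      (∀ i j, i ≤ j → RLlt (i, j) (i₀, j₀) → y i j = x i j) ∧
      ∀ F : Finset ℕ, (∀ m ∈ F, k₀ ≤ m) → (∀ m ∈ F, RLlt (i₀, j₀) (k₀, m)) →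
        F.card = a.length →
        (∃ f ∈ 𝓕, HasPatternOn y f k₀ F a) →
        ∃ g ∈ 𝓕, HasPatternOn y g k₀ F a ∧ |g (y i₀ j₀)| < δ := by
  obtain ⟨-, hx, -⟩ := hx
  obtain ⟨n, hn, M, hM, hMn, hsmall⟩ := exists_infinite_forall_exists_abs_apply_lt (hx i₀).2
    (fun G => {f ∈ 𝓕 | HasPatternOn x f k₀ G a}) (fun _ f hf => h𝓕 f hf.1) hδ a.length j₀
  let τ := Nat.nth (· ∈ M)
  have hτ : StrictMono τ := Nat.nth_strictMono hM
  have hτM (j : ℕ) : τ j ∈ M := Nat.nth_mem_of_infinite hM j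
  let y : ℕ → ℕ → X := fun i j => x i (subarrayColumn i₀ j₀ n τ i j)
  refine ⟨y, isSubarrayOf_subarrayColumn x hτ hij hn (hMn _ (hτM j₀)),
    fun i j _ h => congrArg (x i) (subarrayColumn_of_rlLt h), ?_⟩
  rintro F - hF hcard ⟨f, hf𝓕, hf⟩
  have hrow (g : X →L[ℝ] ℝ) := hasPatternOn_iff_image (y := y) (f := g) (a := a) hτ fun m hm =>
    congrArg (x k₀) (subarrayColumn_of_rlLt_right (hF m hm))
  obtain ⟨g, ⟨hg𝓕, hg⟩, hgδ⟩ := hsmall (F.image τ)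
    (by rw [Finset.coe_image, Set.image_subset_iff]; exact fun m _ => hτM m)
    (by rw [F.card_image_of_injective hτ.injective, hcard]) ⟨f, hf𝓕, (hrow f).1 hf⟩
  have hy₀ : y i₀ j₀ = x i₀ n := congrArg (x i₀) subarrayColumn_self
  exact ⟨g, hg𝓕, (hrow g).2 hg, hy₀ ▸ hgδ⟩

/-- Lemma 2.4. -/
theorem statement_6 {X : Type*} [NormedAddCommGroup X] [NormedSpace ℝ X] [CompleteSpace X]
    (x : ℕ → ℕ → X) (hx : IsRegularArray x)
    (a : List ℝ)
    (𝓕 : Set (X →L[ℝ] ℝ)) (h𝓕 : ∀ f ∈ 𝓕, ‖f‖ ≤ 2)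
    (δ : ℝ) (hδ : 0 < δ) (i₀ j₀ k₀ : ℕ) (hij : i₀ ≤ j₀) :
    ∃ y : ℕ → ℕ → X, IsSubarrayOf y x ∧
      (∀ i j, i ≤ j → RLlt (i, j) (i₀, j₀) → y i j = x i j) ∧
      ∀ F : Finset ℕ, (∀ m ∈ F, k₀ ≤ m) → (∀ m ∈ F, RLlt (i₀, j₀) (k₀, m)) →
        F.card = a.length →
        (∃ f ∈ 𝓕, HasPatternOn y f k₀ F a) →
        ∃ g ∈ 𝓕, HasPatternOn y g k₀ F a ∧ |g (y i₀ j₀)| < δ :=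
  statement_6_general x hx a 𝓕 h𝓕 δ hδ i₀ j₀ k₀ hij

end
end

section
/- Let (x_{i,j})_{(i,j)∈I} be a regular array in a Banach space X, let A⃗ be a finite set of patterns, let 𝓕 ⊆ 2Ba(X*), let δ > 0 and let i₀, k₀ ∈ ℕ. Then there exists a subarray (y_{i,j})_{(i,j)∈I} of (x_{i,j})_{(i,j)∈I} such that for every a⃗ ∈ A⃗, every F ⊆ {k₀, k₀+1, k₀+2, …} with |F| = |a⃗|, and every j₀ ∈ ℕ with j₀ ≥ i₀ and (i₀,j₀) <_{rℓ} (k₀, min F), the following holds: if there exists f ∈ 𝓕 having pattern a⃗ on (k₀,F) with respect to (y_{i,j})_{(i,j)∈I}, then there exists g ∈ 𝓕 having pattern a⃗ on (k₀,F) with respect to (y_{i,j})_{(i,j)∈I} and satisfying |g(y_{i₀,j₀})| < δ. Moreover, (y_{i,j}) can be chosen so that y_{i,j} = x_{i,j} for all (i,j) <_{rℓ} (i₀,i₀). -/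
open Filter

noncomputable section

/-!
Row `i₀` of `x` is weakly null and `𝓕` is weak*-relatively compact. Hence for every infinite set
`Q` of columns there are `l ∈ Q` and an infinite `Q' ⊆ Q` such that every pattern `a ∈ A` that `𝓕`
realises on row `k₀` along an `|a|`-subset of `Q'` is also realised by some `g ∈ 𝓕` with
`|g (x i₀ l)| < δ`. Otherwise infinite Ramsey and pigeonhole give a single pattern `a`, columns
`l₀ < l₁ < ⋯` and `g_q ∈ 𝓕` with `δ ≤ |g_q (x i₀ l_r)|` for all `r ≤ q`, and a weak* cluster point
of `(g_q)` contradicts weak nullness. Iterating yields `c₀ < c₁ < ⋯` with each `c n` good for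
every subset of the later `c`'s. The subarray keeps the entries before `(i₀, i₀)` and sends
column `j ≥ i₀` to column `c (2 (j - i₀))` in rows `≤ i₀` and to `c (2 (j - i₀) + 1)` in rows
`> i₀`.
-/

open Topology

theorem Set.Infinite.exists_strictMono_forall_image_Ioi {S : Set ℕ} (hS : S.Infinite)
    (P : ℕ → Set ℕ → Prop) (hP : ∀ l Q Q', Q' ⊆ Q → P l Q → P l Q')
    (hstep : ∀ Q ⊆ S, Q.Infinite → ∃ l ∈ Q, ∃ Q' ⊆ Q, Q'.Infinite ∧ P l Q') :
    ∃ c : ℕ → ℕ, StrictMono c ∧ (∀ n, c n ∈ S) ∧ ∀ n, P (c n) (c '' Set.Ioi n) := by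
  let Pool := {Q : Set ℕ // Q ⊆ S ∧ Q.Infinite}
  choose l hl Q' hQ' hQ'inf hPQ' using fun Q : Pool => hstep Q.1 Q.2.1 Q.2.2
  let next (Q : Pool) : Pool := ⟨Q' Q \ Set.Iic (l Q),
    (Set.sdiff_subset.trans (hQ' Q)).trans Q.2.1, (hQ'inf Q).sdiff (Set.finite_Iic (l Q))⟩
  let pool (n : ℕ) : Pool := Nat.rec ⟨S, subset_rfl, hS⟩ (fun _ Q => next Q) n
  have hanti : Antitone fun n => (pool n).1 :=
    antitone_nat_of_succ_le fun n => Set.sdiff_subset.trans (hQ' (pool n))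
  have hlater : ∀ n m, n < m → l (pool m) ∈ Q' (pool n) \ Set.Iic (l (pool n)) :=
    fun n m hnm => hanti (Nat.succ_le_of_lt hnm) (hl (pool m))
  refine ⟨fun n => l (pool n), fun n m hnm => not_le.1 (hlater n m hnm).2,
    fun n => (pool n).2.1 (hl _), fun n => hP _ _ _ ?_ (hPQ' (pool n))⟩
  rintro _ ⟨m, hm, rfl⟩
  exact (hlater n m hm).1

def IsHomogeneousOn (col : Finset ℕ → Prop) (p : ℕ) (S : Set ℕ) : Prop :=
  ∀ T T' : Finset ℕ, ↑T ⊆ S → ↑T' ⊆ S → T.card = p → T'.card = p → (col T ↔ col T')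

theorem IsHomogeneousOn.mono {col : Finset ℕ → Prop} {p : ℕ} {S S' : Set ℕ}
    (h : IsHomogeneousOn col p S) (hS' : S' ⊆ S) : IsHomogeneousOn col p S' :=
  fun T T' hT hT' => h T T' (hT.trans hS') (hT'.trans hS')

theorem Set.Infinite.exists_isHomogeneousOn {S : Set ℕ} (hS : S.Infinite) (col : Finset ℕ → Prop)
    (p : ℕ) : ∃ S' ⊆ S, S'.Infinite ∧ IsHomogeneousOn col p S' := by
  induction p generalizing col S with
  | zero =>
    refine ⟨S, subset_rfl, hS, fun T T' _ _ hT hT' => ?_⟩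
    rw [Finset.card_eq_zero.1 hT, Finset.card_eq_zero.1 hT']
  | succ p ih =>
    obtain ⟨c, hc, hcS, hhom⟩ := hS.exists_strictMono_forall_image_Ioi
      (fun n Q => IsHomogeneousOn (fun T => col (insert n T)) p Q)
      (fun _ _ _ hsub h => h.mono hsub)
      (fun Q _ hQ => ⟨_, hQ.nonempty.some_mem, ih hQ _⟩)
    let colour (n : ℕ) : Prop :=
      ∀ T : Finset ℕ, ↑T ⊆ c '' Set.Ioi n → T.card = p → col (insert (c n) T)
    -- the colour of a `(p+1)`-subset of `range c` is decided by its least element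
    have hcolour : ∀ T : Finset ℕ, ↑T ⊆ Set.range c → T.card = p + 1 →
        ∃ n, c n ∈ T ∧ (col T ↔ colour n) := by
      intro T hT hcard
      have hne : T.Nonempty := Finset.card_pos.1 (by omega)
      obtain ⟨n, hn⟩ := hT (T.min'_mem hne)
      have hmem : c n ∈ T := hn ▸ T.min'_mem hne
      have hrest : ↑(T.erase (c n)) ⊆ c '' Set.Ioi n := by
        intro x hx
        obtain ⟨hxn, hxT⟩ := Finset.mem_erase.1 hx
        obtain ⟨k, rfl⟩ := hT hxT
        refine ⟨k, hc.lt_iff_lt.1 (lt_of_le_of_ne ?_ (Ne.symm hxn)), rfl⟩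
        exact hn ▸ T.min'_le _ hxT
      have hrest_card : (T.erase (c n)).card = p := by
        rw [Finset.card_erase_of_mem hmem, hcard, Nat.add_sub_cancel]
      refine ⟨n, hmem, ?_⟩
      rw [← Finset.insert_erase hmem]
      exact ⟨fun h T' hT' hT'card => (hhom n _ _ hrest hT' hrest_card hT'card).1 h,
        fun h => h _ hrest hrest_card⟩
    obtain ⟨K, hK, hKcolour⟩ :
        ∃ K : Set ℕ, K.Infinite ∧ ∀ n ∈ K, ∀ m ∈ K, colour n ↔ colour m := by
      by_cases h : {n | colour n}.Infinite
      · exact ⟨_, h, fun n hn m hm => iff_of_true hn hm⟩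
      · exact ⟨_, (Set.not_infinite.1 h).infinite_compl, fun n hn m hm => iff_of_false hn hm⟩
    refine ⟨c '' K, Set.image_subset_iff.2 fun n _ => hcS n, hK.image hc.injective.injOn,
      fun T T' hT hT' hcard hcard' => ?_⟩
    obtain ⟨n, hn, hTn⟩ := hcolour T (hT.trans (Set.image_subset_range _ _)) hcard
    obtain ⟨n', hn', hTn'⟩ := hcolour T' (hT'.trans (Set.image_subset_range _ _)) hcard'
    obtain ⟨k, hk, hkn⟩ := hT hn
    obtain ⟨k', hk', hkn'⟩ := hT' hn'
    rw [hTn, hTn', ← hc.injective hkn, ← hc.injective hkn']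
    exact hKcolour k hk k' hk'

theorem Set.Infinite.exists_forall_isHomogeneousOn {ι : Type*} {S : Set ℕ} (hS : S.Infinite)
    (A : Finset ι) (col : ι → Finset ℕ → Prop) (p : ι → ℕ) :
    ∃ S' ⊆ S, S'.Infinite ∧ ∀ i ∈ A, IsHomogeneousOn (col i) (p i) S' := by
  classical
  induction A using Finset.induction_on with
  | empty => exact ⟨S, subset_rfl, hS, by simp⟩
  | insert i A _ ih =>
    obtain ⟨S₁, hS₁S, hS₁, hA⟩ := ih
    obtain ⟨S₂, hS₂S₁, hS₂, hi⟩ := hS₁.exists_isHomogeneousOn (col i) (p i)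
    exact ⟨S₂, hS₂S₁.trans hS₁S, hS₂,
      (Finset.forall_mem_insert _ _ _).2 ⟨hi, fun j hj => (hA j hj).mono hS₂S₁⟩⟩

theorem exists_abs_apply_lt_of_weaklyNull {X : Type*} [NormedAddCommGroup X] [NormedSpace ℝ X]
    {v : ℕ → X} (hv : ∀ φ : StrongDual ℝ X, Tendsto (fun r => φ (v r)) atTop (𝓝 0))
    {g : ℕ → StrongDual ℝ X} {M : ℝ} (hg : ∀ q, ‖g q‖ ≤ M) {δ : ℝ} (hδ : 0 < δ) :
    ∃ r q, r ≤ q ∧ |g q (v r)| < δ := by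
  obtain ⟨φ, -, hφ⟩ := (WeakDual.isCompact_closedBall (0 : StrongDual ℝ X) M).exists_mapClusterPt
    (f := atTop) (u := fun q => StrongDual.toWeakDual (g q))
    (tendsto_principal.2 (.of_forall fun q => by simpa using hg q))
  obtain ⟨r, hr⟩ :=
    ((hv (WeakDual.toStrongDual φ)).abs.eventually_lt_const (by simpa using hδ)).exists
  have hcluster : MapClusterPt (φ (v r)) atTop (fun q => g q (v r)) :=
    hφ.continuousAt_comp (WeakBilin.eval_continuous _ (v r)).continuousAt
  obtain ⟨q, hlt, hq⟩ := ((hcluster.frequently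
    ((isOpen_lt continuous_abs continuous_const).mem_nhds hr)).and_eventually
    (eventually_ge_atTop r)).exists
  exact ⟨r, q, hq, hlt⟩

section Patterns

variable {X : Type*} [NormedAddCommGroup X] [NormedSpace ℝ X]

def HasSmallWitness (𝓕 : Set (X →L[ℝ] ℝ)) (x : ℕ → ℕ → X) (k₀ : ℕ) (T : Finset ℕ)
    (a : List ℝ) (v : X) (δ : ℝ) : Prop :=
  (∃ f ∈ 𝓕, HasPatternOn x f k₀ T a) → ∃ g ∈ 𝓕, HasPatternOn x g k₀ T a ∧ |g v| < δ

theorem Set.Infinite.exists_forall_hasSmallWitness {w : ℕ → X}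
    (hw : ∀ φ : X →L[ℝ] ℝ, Tendsto (fun j => φ (w j)) atTop (𝓝 0))
    {𝓕 : Set (X →L[ℝ] ℝ)} {M : ℝ} (h𝓕 : ∀ f ∈ 𝓕, ‖f‖ ≤ M) {δ : ℝ} (hδ : 0 < δ)
    (x : ℕ → ℕ → X) (k₀ : ℕ) (A : Finset (List ℝ)) {Q : Set ℕ} (hQ : Q.Infinite) :
    ∃ l ∈ Q, ∃ Q' ⊆ Q, Q'.Infinite ∧ ∀ a ∈ A, ∀ T : Finset ℕ, ↑T ⊆ Q' → T.card = a.length →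
      HasSmallWitness 𝓕 x k₀ T a (w l) δ := by
  by_contra! hbad
  obtain ⟨c, hc, -, hcbad⟩ := hQ.exists_strictMono_forall_image_Ioi
    (fun l Q' => ∃ a ∈ A, ∀ T : Finset ℕ, ↑T ⊆ Q' → T.card = a.length →
      ¬ HasSmallWitness 𝓕 x k₀ T a (w l) δ)
    (fun _ _ _ hsub ⟨a, ha, h⟩ => ⟨a, ha, fun T hT => h T (hT.trans hsub)⟩)
    (fun R hRQ hR => by
      obtain ⟨l, hl⟩ := hR.nonempty
      obtain ⟨S, hSR, hS, hhom⟩ := hR.exists_forall_isHomogeneousOn A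
        (fun a T => HasSmallWitness 𝓕 x k₀ T a (w l) δ) List.length
      obtain ⟨a, ha, T₀, hT₀, hcard₀, hT₀bad⟩ := hbad l (hRQ hl) S (hSR.trans hRQ) hS
      exact ⟨l, hl, S, hSR, hS, a, ha, fun T hT hcard =>
        (hhom a ha T T₀ hT hT₀ hcard hcard₀).not.2 hT₀bad⟩)
  obtain ⟨a, -, hfreq⟩ :=
    (Filter.frequently_exists_finset A).1 (Frequently.of_forall (f := atTop) hcbad)
  obtain ⟨e, he, hebad⟩ := extraction_of_frequently_atTop hfreq
  let d := c ∘ e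
  have hd : StrictMono d := hc.comp he
  let T (q : ℕ) : Finset ℕ := (Finset.Ioc q (q + a.length)).image d
  have hTbad : ∀ q r, r ≤ q → ¬ HasSmallWitness 𝓕 x k₀ (T q) a (w (d r)) δ := by
    intro q r hrq
    refine hebad r (T q) ?_ ?_
    · intro n hn
      obtain ⟨s, hs, rfl⟩ := Finset.mem_image.1 hn
      exact ⟨e s, he (by have := (Finset.mem_Ioc.1 hs).1; omega), rfl⟩
    · rw [Finset.card_image_of_injective _ hd.injective]
      simp
  choose g hg𝓕 hgpat using fun q => (Classical.not_imp.1 (hTbad q 0 (Nat.zero_le q))).1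
  obtain ⟨r, q, hrq, hlt⟩ := exists_abs_apply_lt_of_weaklyNull
    (fun φ => (hw φ).comp hd.tendsto_atTop) (fun q => h𝓕 _ (hg𝓕 q)) hδ
  obtain ⟨-, hlarge⟩ := Classical.not_imp.1 (hTbad q r hrq)
  exact hlarge ⟨g q, hg𝓕 q, hgpat q, hlt⟩

end Patterns

def columnSelection (i₀ : ℕ) (c : ℕ → ℕ) (i j : ℕ) : ℕ :=
  if j < i₀ ∨ (j = i₀ ∧ i < i₀) then j else c (2 * (j - i₀) + if i ≤ i₀ then 0 else 1)

section ColumnSelection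

variable {i₀ : ℕ} {c : ℕ → ℕ}

theorem columnSelection_of_rlLt {i j : ℕ} (h : RLlt (i, j) (i₀, i₀)) :
    columnSelection i₀ c i j = j :=
  if_pos h

theorem columnSelection_self {j : ℕ} (hj : i₀ ≤ j) :
    columnSelection i₀ c i₀ j = c (2 * (j - i₀)) := by
  rw [columnSelection, if_neg (by omega), if_pos le_rfl, add_zero]

theorem columnSelection_mem_image_Ioi {j₀ k m : ℕ} (hj₀ : i₀ ≤ j₀) (h : RLlt (i₀, j₀) (k, m)) :
    columnSelection i₀ c k m ∈ c '' Set.Ioi (2 * (j₀ - i₀)) := by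
  unfold RLlt at h
  rw [columnSelection, if_neg (by omega)]
  exact ⟨_, by split_ifs <;> simp only [Set.mem_Ioi] <;> omega, rfl⟩

variable (hc : StrictMono c) (hc0 : i₀ ≤ c 0)
include hc hc0

theorem le_columnSelection (i j : ℕ) : j ≤ columnSelection i₀ c i j := by
  unfold columnSelection
  split_ifs
  · exact le_rfl
  all_goals exact le_trans (by omega) (hc.add_le_nat _ 0)

theorem columnSelection_lt_of_lt {i i' j j' : ℕ} (hj : j < j') :
    columnSelection i₀ c i j < columnSelection i₀ c i' j' := by
  by_cases h : j < i₀ ∨ (j = i₀ ∧ i < i₀)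
  · rw [columnSelection_of_rlLt h]
    exact hj.trans_le (le_columnSelection hc hc0 i' j')
  · have h' : ¬(j' < i₀ ∨ (j' = i₀ ∧ i' < i₀)) := by omega
    simp only [columnSelection, if_neg h, if_neg h']
    exact hc (by split_ifs <;> omega)

theorem columnSelection_le_of_le {i i' : ℕ} (hi : i ≤ i') (j : ℕ) :
    columnSelection i₀ c i j ≤ columnSelection i₀ c i' j := by
  by_cases h : j < i₀ ∨ (j = i₀ ∧ i < i₀)
  · rw [columnSelection_of_rlLt h]
    exact le_columnSelection hc hc0 i' j
  · have h' : ¬(j < i₀ ∨ (j = i₀ ∧ i' < i₀)) := by omega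
    simp only [columnSelection, if_neg h, if_neg h']
    exact hc.monotone (by split_ifs <;> omega)

theorem rlLt_columnSelection {i i' j j' : ℕ} (h : RLlt (i, j) (i', j')) :
    RLlt (i, columnSelection i₀ c i j) (i', columnSelection i₀ c i' j') := by
  rcases h with hj | ⟨rfl, hi⟩
  · exact Or.inl (columnSelection_lt_of_lt hc hc0 hj)
  · exact (columnSelection_le_of_le hc hc0 hi.le j).lt_or_eq.imp id (⟨·, hi⟩)

theorem isSubarrayOf_columnSelection {X : Type*} [NormedAddCommGroup X] (x : ℕ → ℕ → X) :
    IsSubarrayOf (fun i j => x i (columnSelection i₀ c i j)) x :=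
  ⟨columnSelection i₀ c, fun i j hij => hij.trans (le_columnSelection hc hc0 i j),
    fun _ _ _ _ _ _ h => rlLt_columnSelection hc hc0 h, fun _ _ _ => rfl⟩

end ColumnSelection

theorem hasPatternOn_comp_iff {X : Type*} [NormedAddCommGroup X] [NormedSpace ℝ X]
    {x : ℕ → ℕ → X} {h : ℕ → ℕ → ℕ} {k₀ : ℕ} (hk : StrictMono (h k₀)) {f : X →L[ℝ] ℝ}
    {F : Finset ℕ} {a : List ℝ} :
    HasPatternOn (fun i j => x i (h i j)) f k₀ F a ↔
      HasPatternOn x f k₀ (F.image (h k₀)) a := by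
  have himage : F.image (h k₀) = F.map ⟨h k₀, hk.injective⟩ :=
    (F.map_eq_image ⟨h k₀, hk.injective⟩).symm
  rw [HasPatternOn, HasPatternOn, himage, ← (hk.strictMonoOn _).map_finsetSort, List.map_map]
  rfl

theorem statement_7_general {X : Type*} [NormedAddCommGroup X] [NormedSpace ℝ X]
    (x : ℕ → ℕ → X) (hx : IsRegularArray x)
    (A : Finset (List ℝ))
    (𝓕 : Set (X →L[ℝ] ℝ)) (h𝓕 : ∀ f ∈ 𝓕, ‖f‖ ≤ 2)
    (δ : ℝ) (hδ : 0 < δ) (i₀ k₀ : ℕ) :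
    ∃ y : ℕ → ℕ → X, IsSubarrayOf y x ∧
      (∀ i j, i ≤ j → RLlt (i, j) (i₀, i₀) → y i j = x i j) ∧
      ∀ a ∈ A, ∀ F : Finset ℕ, (∀ m ∈ F, k₀ ≤ m) → F.card = a.length →
        ∀ j₀ : ℕ, i₀ ≤ j₀ → (∀ m ∈ F, RLlt (i₀, j₀) (k₀, m)) →
        (∃ f ∈ 𝓕, HasPatternOn y f k₀ F a) →
        ∃ g ∈ 𝓕, HasPatternOn y g k₀ F a ∧ |g (y i₀ j₀)| < δ := by
  obtain ⟨-, hArr, -⟩ := hx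
  obtain ⟨c, hc, hcS, hgood⟩ := (Set.Ici_infinite i₀).exists_strictMono_forall_image_Ioi
    (fun l Q => ∀ a ∈ A, ∀ T : Finset ℕ, ↑T ⊆ Q → T.card = a.length →
      HasSmallWitness 𝓕 x k₀ T a (x i₀ l) δ)
    (fun _ _ _ hsub h a ha T hT => h a ha T (hT.trans hsub))
    (fun _ _ hQ => hQ.exists_forall_hasSmallWitness (hArr i₀).2 h𝓕 hδ x k₀ A)
  have hc0 : i₀ ≤ c 0 := hcS 0
  refine ⟨_, isSubarrayOf_columnSelection hc hc0 x,
    fun i j _ h => congrArg (x i) (columnSelection_of_rlLt h), ?_⟩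
  intro a ha F _ hcard j₀ hj₀ hF hf
  have hrow : StrictMono (columnSelection i₀ c k₀) :=
    fun _ _ h => columnSelection_lt_of_lt hc hc0 h
  obtain ⟨g, hg, hpat, hsmall⟩ := hgood (2 * (j₀ - i₀)) a ha (F.image (columnSelection i₀ c k₀))
    (by
      rw [Finset.coe_image, Set.image_subset_iff]
      exact fun m hm => columnSelection_mem_image_Ioi hj₀ (hF m hm))
    (by rw [Finset.card_image_of_injective _ hrow.injective, hcard])
    (by simpa only [hasPatternOn_comp_iff hrow] using hf)
  exact ⟨g, hg, (hasPatternOn_comp_iff hrow).2 hpat, by rwa [columnSelection_self hj₀]⟩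

/-- Lemma 2.5. -/
theorem statement_7 {X : Type*} [NormedAddCommGroup X] [NormedSpace ℝ X] [CompleteSpace X]
    (x : ℕ → ℕ → X) (hx : IsRegularArray x)
    (A : Finset (List ℝ))
    (𝓕 : Set (X →L[ℝ] ℝ)) (h𝓕 : ∀ f ∈ 𝓕, ‖f‖ ≤ 2)
    (δ : ℝ) (hδ : 0 < δ) (i₀ k₀ : ℕ) :
    ∃ y : ℕ → ℕ → X, IsSubarrayOf y x ∧
      (∀ i j, i ≤ j → RLlt (i, j) (i₀, i₀) → y i j = x i j) ∧
      ∀ a ∈ A, ∀ F : Finset ℕ, (∀ m ∈ F, k₀ ≤ m) → F.card = a.length →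
        ∀ j₀ : ℕ, i₀ ≤ j₀ → (∀ m ∈ F, RLlt (i₀, j₀) (k₀, m)) →
        (∃ f ∈ 𝓕, HasPatternOn y f k₀ F a) →
        ∃ g ∈ 𝓕, HasPatternOn y g k₀ F a ∧ |g (y i₀ j₀)| < δ :=
  statement_7_general x hx A 𝓕 h𝓕 δ hδ i₀ k₀

end
end

section
/- Let (x_{i,j})_{(i,j)∈I} be a regular array in a Banach space X, let A⃗ be a finite set of patterns, let 𝓕 ⊆ 2Ba(X*) and let δ > 0. Then there exists a subarray (y_{i,j})_{(i,j)∈I} of (x_{i,j})_{(i,j)∈I} such that for every a⃗ ∈ A⃗, every k₀ ∈ ℕ, every F ⊆ {k₀, k₀+1, k₀+2, …} with |F| = |a⃗|, and every (i₀,j₀) ∈ I with (1,k₀) ≤_{rℓ} (i₀,j₀) <_{rℓ} (k₀, min F), the following holds: if there exists f ∈ 𝓕 having pattern a⃗ on (k₀,F) with respect to (y_{i,j})_{(i,j)∈I}, then there exists g ∈ 𝓕 having pattern a⃗ on (k₀,F) with respect to (y_{i,j})_{(i,j)∈I} and satisfying |g(y_{i₀,j₀})| < δ. -/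
open Filter

noncomputable section

/-!
The subarray is built by a diagonal argument along the enumeration `Nat.pair` of the entries:
at the step of entry `(i, j)` one picks a column `n` of row `i` and shrinks the set of admissible
later columns so that every pattern from `A`, on a row `k ≤ j`, that `𝓕` attains on later columns
is also attained by a functional that is `δ`-small at `x i n`. If such a step were impossible,
Ramsey's theorem would give columns `ν₀ < ν₁ < ⋯` and a single pattern such that, on suitable
sets of columns, every functional of `𝓕` realising it is `δ`-large at all of `x i ν₀, …, x i ν_N`.
A weak-star cluster point (Banach–Alaoglu) of such functionals would then be `δ`-large along the
whole weakly null sequence `(x i ν_n)`, which is absurd.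
-/

open Finset Topology

theorem exists_strictMono_forall_image_Ioi {R : Set ℕ} (hR : R.Infinite)
    (Q : ℕ → ℕ → Set ℕ → Prop) (hQ : ∀ r n {T T' : Set ℕ}, T' ⊆ T → Q r n T → Q r n T')
    (hstep : ∀ r (S : Set ℕ), S ⊆ R → S.Infinite →
      ∃ n ∈ S, ∃ T ⊆ S, T.Infinite ∧ (∀ m ∈ T, n < m) ∧ Q r n T) :
    ∃ ν : ℕ → ℕ, StrictMono ν ∧ (∀ r, ν r ∈ R) ∧ ∀ r, Q r (ν r) (ν '' Set.Ioi r) := by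
  have hstep' : ∀ r (S : {S : Set ℕ // S ⊆ R ∧ S.Infinite}),
      ∃ p : ℕ × {S : Set ℕ // S ⊆ R ∧ S.Infinite},
        p.1 ∈ S.1 ∧ p.2.1 ⊆ S.1 ∧ (∀ m ∈ p.2.1, p.1 < m) ∧ Q r p.1 p.2.1 := by
    rintro r ⟨S, hSR, hS⟩
    obtain ⟨n, hn, T, hTS, hT, hnT, hQT⟩ := hstep r S hSR hS
    exact ⟨(n, ⟨T, hTS.trans hSR, hT⟩), hn, hTS, hnT, hQT⟩
  choose next hnext_mem hnext_sub hnext_lt hnext_Q using hstep'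
  let S : ℕ → {S : Set ℕ // S ⊆ R ∧ S.Infinite} :=
    fun r => Nat.rec ⟨R, subset_rfl, hR⟩ (fun r S => (next r S).2) r
  have hS_anti : Antitone fun r => (S r).1 :=
    antitone_nat_of_succ_le fun r => hnext_sub r (S r)
  have hν_mem : ∀ r r', r < r' → (next r' (S r')).1 ∈ (S (r + 1)).1 :=
    fun r r' h => hS_anti h (hnext_mem r' (S r'))
  have hν : StrictMono fun r => (next r (S r)).1 :=
    fun r r' h => hnext_lt r (S r) _ (hν_mem r r' h)
  refine ⟨fun r => (next r (S r)).1, hν, fun r => (S r).2.1 (hnext_mem r (S r)), fun r => ?_⟩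
  refine hQ r _ ?_ (hnext_Q r (S r))
  rintro _ ⟨r', hr', rfl⟩
  exact hν_mem r r' hr'

theorem exists_infinite_subset_monochromatic {κ : Type*} [Finite κ] (c : Finset ℕ → κ)
    (p : ℕ) {R : Set ℕ} (hR : R.Infinite) :
    ∃ R' ⊆ R, R'.Infinite ∧ ∃ k, ∀ s : Finset ℕ, ↑s ⊆ R' → #s = p → c s = k := by
  induction p generalizing c R with
  | zero => exact ⟨R, subset_rfl, hR, c ∅, fun s _ hs => by rw [card_eq_zero.1 hs]⟩
  | succ p ih =>
    obtain ⟨ν, hν, hνR, hQ⟩ := exists_strictMono_forall_image_Ioi hR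
      (fun _ n T => ∃ k, ∀ t : Finset ℕ, ↑t ⊆ T → #t = p → c (insert n t) = k)
      (fun _ _ _ _ hT ⟨k, hk⟩ => ⟨k, fun t ht => hk t (ht.trans hT)⟩)
      (fun _ S _ hS => by
        obtain ⟨n, hn⟩ := hS.nonempty
        obtain ⟨T, hT, hTinf, hk⟩ := ih (fun t => c (insert n t)) (hS.sdiff (Set.finite_Iic n))
        exact ⟨n, hn, T, hT.trans Set.sdiff_subset, hTinf,
          fun m hm => not_le.1 (hT hm).2, hk⟩)
    choose k hk using hQ
    obtain ⟨k₀, hk₀⟩ := Finite.exists_infinite_fiber k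
    refine ⟨ν '' (k ⁻¹' {k₀}), Set.image_subset_iff.2 fun r _ => hνR r,
      (Set.infinite_coe_iff.1 hk₀).image hν.injective.injOn, k₀, fun s hs hcard => ?_⟩
    have hne : s.Nonempty := card_pos.1 (by omega)
    -- `s` is its minimum `ν r` together with a `p`-subset of `ν '' Ioi r`
    obtain ⟨r, hr, hrmin⟩ := hs (s.min'_mem hne)
    have hrest : ↑(s.erase (s.min' hne)) ⊆ ν '' Set.Ioi r := fun m hm => by
      obtain ⟨r', -, rfl⟩ := hs (mem_of_mem_erase hm)
      exact ⟨r', hν.lt_iff_lt.1 (hrmin ▸ min'_lt_of_mem_erase_min' s hne hm), rfl⟩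
    have := hk r _ hrest (by rw [card_erase_of_mem (s.min'_mem hne)]; omega)
    rwa [hrmin, insert_erase (s.min'_mem hne), hr] at this

theorem exists_infinite_subset_monochromatic_family {ι κ : Type*} [Finite κ] (C : Finset ι)
    (p : ι → ℕ) (c : ι → Finset ℕ → κ) {R : Set ℕ} (hR : R.Infinite) :
    ∃ R' ⊆ R, R'.Infinite ∧ ∀ i ∈ C, ∃ k, ∀ s : Finset ℕ, ↑s ⊆ R' → #s = p i → c i s = k := by
  induction C using Finset.cons_induction generalizing R with
  | empty => exact ⟨R, subset_rfl, hR, by simp⟩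
  | cons i C hi ih =>
    obtain ⟨R₁, hR₁, hR₁inf, hC⟩ := ih hR
    obtain ⟨R₂, hR₂, hR₂inf, hk⟩ := exists_infinite_subset_monochromatic (c i) (p i) hR₁inf
    refine ⟨R₂, hR₂.trans hR₁, hR₂inf, fun j hj => ?_⟩
    rcases mem_cons.1 hj with rfl | hj
    · exact hk
    · obtain ⟨k, hk⟩ := hC j hj
      exact ⟨k, fun s hs => hk s (hs.trans hR₂)⟩

theorem RLlt.pair_lt_pair {i j i' j' : ℕ} (h : RLlt (i, j) (i', j')) (hij : i ≤ j) :
    Nat.pair i j < Nat.pair i' j' := by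
  rcases h with hj | ⟨rfl, hi⟩
  · unfold Nat.pair
    split_ifs <;> nlinarith
  · exact Nat.pair_lt_pair_left j hi

section Patterns

variable {X : Type*} [NormedAddCommGroup X] [NormedSpace ℝ X]

def IsWeaklyNull (u : ℕ → X) : Prop :=
  ∀ f : X →L[ℝ] ℝ, Tendsto (fun n => f (u n)) atTop (𝓝 0)

theorem IsWeaklyNull.comp_tendsto {u : ℕ → X} (hu : IsWeaklyNull u) {φ : ℕ → ℕ}
    (hφ : Tendsto φ atTop atTop) : IsWeaklyNull (u ∘ φ) :=
  fun f => (hu f).comp hφ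

theorem IsWeaklyNull.exists_forall_mem_exists_abs_apply_lt {u : ℕ → X} (hu : IsWeaklyNull u)
    {𝓕 : Set (X →L[ℝ] ℝ)} {r : ℝ} (h𝓕 : ∀ f ∈ 𝓕, ‖f‖ ≤ r) {δ : ℝ} (hδ : 0 < δ) :
    ∃ N, ∀ f ∈ 𝓕, ∃ n ≤ N, |f (u n)| < δ := by
  by_contra! h
  choose f hf𝓕 hf using h
  obtain ⟨φ, -, hφ⟩ := (WeakDual.isCompact_closedBall (𝕜 := ℝ) (E := X) 0 r).exists_mapClusterPt
    (f := atTop) (u := fun N => StrongDual.toWeakDual (f N)) <|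
    le_principal_iff.2 <| mem_map.2 <| Eventually.of_forall fun N => by simpa using h𝓕 _ (hf𝓕 N)
  have hφ_large : ∀ n, δ ≤ |φ (u n)| := fun n =>
    (isClosed_le continuous_const ((WeakDual.eval_continuous (u n)).abs)).mem_of_mapClusterPt hφ
      ((eventually_ge_atTop n).mono fun N hN => hf N n hN)
  have hφ_null := (hu (WeakDual.toStrongDual φ)).abs
  rw [abs_zero] at hφ_null
  obtain ⟨n, hn⟩ := (hφ_null.eventually_lt_const hδ).exists
  exact (hφ_large n).not_gt hn

theorem hasPatternOn_iff_map {x y : ℕ → ℕ → X} {k : ℕ} {g : ℕ → ℕ} (hg : StrictMono g)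
    (hy : ∀ j, y k j = x k (g j)) (f : X →L[ℝ] ℝ) (F : Finset ℕ) (a : List ℝ) :
    HasPatternOn y f k F a ↔ HasPatternOn x f k (F.map ⟨g, hg.injective⟩) a := by
  unfold HasPatternOn
  rw [← (hg.strictMonoOn F).map_finsetSort, List.map_map]
  simp only [Function.comp_def, hy]
  rfl

def HasSmallPatternWitness (𝓕 : Set (X →L[ℝ] ℝ)) (x : ℕ → ℕ → X) (k : ℕ) (s : Finset ℕ)
    (a : List ℝ) (w : X) (δ : ℝ) : Prop :=
  (∃ f ∈ 𝓕, HasPatternOn x f k s a) → ∃ g ∈ 𝓕, HasPatternOn x g k s a ∧ |g w| < δ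

theorem IsWeaklyNull.exists_hasSmallPatternWitness {u : ℕ → X} (hu : IsWeaklyNull u)
    (x : ℕ → ℕ → X) {𝓕 : Set (X →L[ℝ] ℝ)} {r : ℝ} (h𝓕 : ∀ f ∈ 𝓕, ‖f‖ ≤ r) {δ : ℝ}
    (hδ : 0 < δ) (C : Finset (List ℝ × ℕ)) {R : Set ℕ} (hR : R.Infinite) :
    ∃ n₀ ∈ R, ∃ R' ⊆ R, R'.Infinite ∧ (∀ m ∈ R', n₀ < m) ∧ ∀ c ∈ C, ∀ s : Finset ℕ,
      ↑s ⊆ R' → #s = c.1.length → HasSmallPatternWitness 𝓕 x c.2 s c.1 (u n₀) δ := by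
  by_contra! hbad
  -- By Ramsey, a failure below every point can be made to hold on all sets of a tail.
  obtain ⟨ν, hν, -, hνbad⟩ := exists_strictMono_forall_image_Ioi hR
    (fun _ n T => ∃ c : C, ∀ s : Finset ℕ, ↑s ⊆ T → #s = c.1.1.length →
      ¬ HasSmallPatternWitness 𝓕 x c.1.2 s c.1.1 (u n) δ)
    (fun _ _ _ _ hT ⟨c, hc⟩ => ⟨c, fun s hs => hc s (hs.trans hT)⟩)
    (fun _ S hSR hS => by
      obtain ⟨n, hn⟩ := hS.nonempty
      obtain ⟨T, hT, hTinf, hmono⟩ := exists_infinite_subset_monochromatic_family C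
        (fun c => c.1.length) (fun c s => ¬ HasSmallPatternWitness 𝓕 x c.2 s c.1 (u n) δ)
        (hS.sdiff (Set.finite_Iic n))
      have hnT : ∀ m ∈ T, n < m := fun m hm => not_le.1 (hT hm).2
      obtain ⟨c, hc, s₀, hs₀, hcard₀, hs₀bad⟩ :=
        hbad n (hSR hn) T ((hT.trans Set.sdiff_subset).trans hSR) hTinf hnT
      obtain ⟨k, hk⟩ := hmono c hc
      refine ⟨n, hn, T, hT.trans Set.sdiff_subset, hTinf, hnT, ⟨c, hc⟩, fun s hs hcard => ?_⟩
      exact (hk s hs hcard).trans (hk s₀ hs₀ hcard₀).symm ▸ hs₀bad)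
  choose c hc using hνbad
  obtain ⟨c₀, hc₀⟩ := Finite.exists_infinite_fiber c
  obtain ⟨e, he, hce⟩ := extraction_of_frequently_atTop
    (Nat.frequently_atTop_iff_infinite.2 (Set.infinite_coe_iff.1 hc₀))
  obtain ⟨N, hN⟩ := (hu.comp_tendsto (hν.comp he).tendsto_atTop)
    |>.exists_forall_mem_exists_abs_apply_lt h𝓕 hδ
  obtain ⟨s, hs, hcard⟩ :=
    ((Set.Ioi_infinite (e N)).image hν.injective.injOn).exists_subset_card_eq c₀.1.1.length
  have hs_bad : ∀ n ≤ N, ¬ HasSmallPatternWitness 𝓕 x c₀.1.2 s c₀.1.1 (u (ν (e n))) δ :=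
    fun n hn => hce n ▸ hc (e n) s
      (hs.trans (Set.image_mono (Set.Ioi_subset_Ioi (he.monotone hn)))) (by rw [hce n, hcard])
  simp only [HasSmallPatternWitness, Classical.not_imp, not_exists, not_and, not_lt] at hs_bad
  obtain ⟨f, hf𝓕, hf⟩ := (hs_bad N le_rfl).1
  obtain ⟨n, hn, hsmall⟩ := hN f hf𝓕
  exact hsmall.not_ge ((hs_bad n hn).2 f hf𝓕 hf)

end Patterns

theorem statement_8_general {X : Type*} [NormedAddCommGroup X] [NormedSpace ℝ X]
    (x : ℕ → ℕ → X) (hx : IsRegularArray x)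
    (A : Finset (List ℝ))
    (𝓕 : Set (X →L[ℝ] ℝ)) (h𝓕 : ∀ f ∈ 𝓕, ‖f‖ ≤ 2)
    (δ : ℝ) (hδ : 0 < δ) :
    ∃ y : ℕ → ℕ → X, IsSubarrayOf y x ∧
      ∀ a ∈ A, ∀ (k₀ : ℕ) (F : Finset ℕ), (∀ m ∈ F, k₀ ≤ m) → F.card = a.length →
        ∀ i₀ j₀ : ℕ, i₀ ≤ j₀ →
          -- (1, k₀) ≤_{rℓ} (i₀, j₀) (with rows indexed from 0, i.e. (0, k₀) ≤_{rℓ} (i₀, j₀))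
          k₀ ≤ j₀ →
          -- (i₀, j₀) <_{rℓ} (k₀, min F)
          (∀ m ∈ F, RLlt (i₀, j₀) (k₀, m)) →
        (∃ f ∈ 𝓕, HasPatternOn y f k₀ F a) →
        ∃ g ∈ 𝓕, HasPatternOn y g k₀ F a ∧ |g (y i₀ j₀)| < δ := by
  obtain ⟨-, harr, -⟩ := hx
  -- Step `r` serves the entry `Nat.unpair r`, so entry `(i, j)` is chosen at step `Nat.pair i j`.
  obtain ⟨ν, hν, -, hgood⟩ := exists_strictMono_forall_image_Ioi Set.infinite_univ
    (fun r n T => ∀ c ∈ A ×ˢ range (r + 1), ∀ s : Finset ℕ, ↑s ⊆ T → #s = c.1.length →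
      HasSmallPatternWitness 𝓕 x c.2 s c.1 (x (Nat.unpair r).1 n) δ)
    (fun _ _ _ _ hT h c hc s hs => h c hc s (hs.trans hT))
    (fun _ _ _ hS => IsWeaklyNull.exists_hasSmallPatternWitness (harr _).2 x h𝓕 hδ _ hS)
  refine ⟨fun i j => x i (ν (Nat.pair i j)), ⟨fun i j => ν (Nat.pair i j),
    fun i j _ => (Nat.left_le_pair i j).trans (hν.id_le _),
    fun i j i' j' hij _ h => Or.inl (hν (h.pair_lt_pair hij)), fun _ _ _ => rfl⟩, ?_⟩
  intro a ha k₀ F _ hcard i₀ j₀ hij hkj hlt hf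
  have hrow : StrictMono fun m => ν (Nat.pair k₀ m) :=
    hν.comp fun _ _ => Nat.pair_lt_pair_right k₀
  simp only [hasPatternOn_iff_map (x := x) (y := fun i j => x i (ν (Nat.pair i j))) hrow
    fun _ => rfl] at hf ⊢
  have hs : ↑(F.map ⟨_, hrow.injective⟩) ⊆ ν '' Set.Ioi (Nat.pair i₀ j₀) := fun z hz => by
    obtain ⟨m, hm, rfl⟩ := mem_map.1 hz
    exact ⟨_, (hlt m hm).pair_lt_pair hij, rfl⟩
  have hctx : (a, k₀) ∈ A ×ˢ range (Nat.pair i₀ j₀ + 1) :=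
    mem_product.2 ⟨ha, mem_range.2 (Nat.lt_succ_of_le (hkj.trans (Nat.right_le_pair i₀ j₀)))⟩
  simpa [Nat.unpair_pair] using hgood _ _ hctx _ hs (by rw [card_map, hcard]) hf

/-- Lemma 2.7. -/
theorem statement_8 {X : Type*} [NormedAddCommGroup X] [NormedSpace ℝ X] [CompleteSpace X]
    (x : ℕ → ℕ → X) (hx : IsRegularArray x)
    (A : Finset (List ℝ))
    (𝓕 : Set (X →L[ℝ] ℝ)) (h𝓕 : ∀ f ∈ 𝓕, ‖f‖ ≤ 2)
    (δ : ℝ) (hδ : 0 < δ) :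
    ∃ y : ℕ → ℕ → X, IsSubarrayOf y x ∧
      ∀ a ∈ A, ∀ (k₀ : ℕ) (F : Finset ℕ), (∀ m ∈ F, k₀ ≤ m) → F.card = a.length →
        ∀ i₀ j₀ : ℕ, i₀ ≤ j₀ →
          -- (1, k₀) ≤_{rℓ} (i₀, j₀) (with rows indexed from 0, i.e. (0, k₀) ≤_{rℓ} (i₀, j₀))
          k₀ ≤ j₀ →
          -- (i₀, j₀) <_{rℓ} (k₀, min F)
          (∀ m ∈ F, RLlt (i₀, j₀) (k₀, m)) →
        (∃ f ∈ 𝓕, HasPatternOn y f k₀ F a) →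
        ∃ g ∈ 𝓕, HasPatternOn y g k₀ F a ∧ |g (y i₀ j₀)| < δ :=
  statement_8_general x hx A 𝓕 h𝓕 δ hδ

end
end

section
/- Let X be a Banach space, let (x_n) be a seminormalized basic sequence in X having Property P2, and let (z_n) be a seminormalized basic sequence (not necessarily in X). Assume that (x_n) has a spreading model (x̃_n) such that (x̃_n) << (z_n). Then for every sequence (δ_n)_{n=2}^∞ of positive reals there exist δ₁ > 0, an increasing sequence M₁ < M₂ < ⋯ of positive integers, and a subsequence (x_{n_i}) of (x_i) such that for all finitely supported scalars (a_i): ‖∑_i a_i x_{n_i}‖ ≤ sup_{n∈ℕ} sup{ δ_n ‖∑_{i∈F} a_i z_i‖ : F ⊆ ℕ finite, n ≤ min F, |F| ≤ M_n }. -/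
open Filter

noncomputable section

/-! Write `v` for the norm of `∑ a i • x (φ i)` and `Q` for the supremum on the right. The
coefficients are sorted into levels `ρ (n + 1) * v ≤ |a i| < ρ n * v` (level `0`:
`ρ 1 * v ≤ |a i|`). Property P2, transferred to the subsequence, bounds the size of level `n` by
`M n`; level `0` thus has at most `M 0` terms, and `δ₀` is chosen so that its norm is at most
`Q / 2`. On a level `n ≥ 1` the indices `i ≥ n` form a set `F` with `#F ≤ M n ≤ φ (min F)`, so
the spreading model replaces `x (φ i)` by `xt i`, and s.c. domination with constant
`δ n / 2 ^ (n + 2)` bounds the result by `Q / 2 ^ (n + 2)` up to an error `O(ρ n * v)`; the fewer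
than `n` indices `i < n` carry coefficients below `ρ n * v`. Choosing `ρ n` small makes level
`n ≥ 1` contribute at most `(Q + v) / 2 ^ (n + 2)`, and summing gives `v ≤ Q / 2 + (Q + v) / 4`,
i.e. `v ≤ Q`. -/

open Finset

lemma Finset.sum_range_indicator_mul_smul {V : Type*} [AddCommMonoid V] [Module ℝ V]
    {F : Finset ℕ} {K : ℕ} (hF : F ⊆ range K) (c : ℝ) (a : ℕ → ℝ) (w : ℕ → V) :
    ∑ i ∈ range K, (F : Set ℕ).indicator (fun i => c * a i) i • w i
      = c • ∑ i ∈ F, a i • w i := by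
  simp_rw [← Set.indicator_smul_apply_left, sum_indicator_subset _ hF, smul_sum, mul_smul]

lemma Finset.sum_range_mul_smul_comp {V : Type*} [AddCommMonoid V] [Module ℝ V]
    {F : Finset ℕ} {k : ℕ → ℕ} (hk : Set.InjOn k (range #F)) (hkF : (range #F).image k = F)
    (c : ℝ) (a : ℕ → ℝ) (w : ℕ → V) :
    ∑ j ∈ range #F, (c * a (k j)) • w (k j) = c • ∑ i ∈ F, a i • w i := by
  conv_rhs => rw [← hkF, sum_image hk]
  simp_rw [smul_sum, mul_smul]

lemma Finset.exists_strictMono_image_range (F : Finset ℕ) :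
    ∃ k : ℕ → ℕ, StrictMono k ∧ (range #F).image k = F := by
  set e := F.orderEmbOfFin rfl
  refine ⟨fun j => if h : j < #F then e ⟨j, h⟩ else F.sup id + 1 + j,
    strictMono_nat_of_lt_succ fun j => ?_, ?_⟩
  · by_cases hj : j + 1 < #F
    · simp only [dif_pos hj, dif_pos (j.lt_succ_self.trans hj)]
      exact e.strictMono (Fin.mk_lt_mk.2 j.lt_succ_self)
    · rw [dif_neg hj]
      split_ifs with h
      · have := le_sup (f := id) (show e ⟨j, h⟩ ∈ F from F.orderEmbOfFin_mem rfl _)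
        simp only [id] at this
        omega
      · omega
  · ext i
    simp only [mem_image, mem_range]
    constructor
    · rintro ⟨j, hj, rfl⟩
      rw [dif_pos hj]
      exact F.orderEmbOfFin_mem rfl _
    · intro hi
      obtain ⟨j, -, rfl⟩ := mem_image.1 ((F.image_orderEmbOfFin_univ rfl).symm ▸ hi)
      exact ⟨j, j.2, dif_pos j.2⟩

lemma norm_sum_le_of_fiber_bounds {ι E : Type*} [SeminormedAddCommGroup E]
    (s : Finset ι) (f : ι → E) (ℓ : ι → ℕ) {Q : ℝ}
    (h₀ : ‖∑ i ∈ s with ℓ i = 0, f i‖ ≤ Q / 2)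
    (hpos : ∀ n, 0 < n → ‖∑ i ∈ s with ℓ i = n, f i‖ ≤ (1 / 2) ^ (n + 2) * (Q + ‖∑ i ∈ s, f i‖)) :
    ‖∑ i ∈ s, f i‖ ≤ Q := by
  set v := ‖∑ i ∈ s, f i‖
  set T := (s.image ℓ).sup id
  have hQv : 0 ≤ Q + v := by
    linarith [norm_nonneg (∑ i ∈ s with ℓ i = 0, f i), norm_nonneg (∑ i ∈ s, f i)]
  have htail : ∑ k ∈ range T, ‖∑ i ∈ s with ℓ i = k + 1, f i‖ ≤ (Q + v) / 4 :=
    calc ∑ k ∈ range T, ‖∑ i ∈ s with ℓ i = k + 1, f i‖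
        ≤ ∑ k ∈ range T, (1 / 2) ^ k * ((Q + v) / 8) :=
          sum_le_sum fun k _ => (hpos (k + 1) k.succ_pos).trans_eq (by ring)
      _ ≤ 2 * ((Q + v) / 8) := by
          rw [← sum_mul]; exact mul_le_mul_of_nonneg_right (sum_geometric_two_le T) (by positivity)
      _ = (Q + v) / 4 := by ring
  have hv : v ≤ Q / 2 + (Q + v) / 4 :=
    calc v = ‖∑ n ∈ range (T + 1), ∑ i ∈ s with ℓ i = n, f i‖ := by
          rw [sum_fiberwise_of_maps_to fun i hi => subset_range_sup_succ _ (mem_image_of_mem ℓ hi)]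
      _ ≤ ∑ n ∈ range (T + 1), ‖∑ i ∈ s with ℓ i = n, f i‖ := norm_sum_le _ _
      _ ≤ Q / 2 + (Q + v) / 4 := by rw [sum_range_succ']; linarith
  linarith

lemma exists_apply_succ_le_lt_apply {u : ℕ → ℝ} (hu : Tendsto u atTop (nhds 0)) {t : ℝ}
    (ht : 0 < t) :
    ∃ n, u (n + 1) ≤ t ∧ (0 < n → t < u n) := by
  classical
  have hex : ∃ n, u (n + 1) ≤ t :=
    ((hu.comp (tendsto_add_atTop_nat 1)).eventually (ge_mem_nhds ht)).exists
  refine ⟨Nat.find hex, Nat.find_spec hex, fun hpos => ?_⟩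
  have := Nat.find_min hex (Nat.sub_one_lt hpos.ne')
  rwa [not_le, Nat.sub_add_cancel hpos] at this

lemma exists_pos_tendsto_zero_mul_le (K : ℕ → ℝ) :
    ∃ ρ : ℕ → ℝ, (∀ n, 0 < ρ n) ∧ Tendsto ρ atTop (nhds 0) ∧
      ∀ n, ρ n * K n ≤ (1 / 2) ^ (n + 2) := by
  refine ⟨fun n => (1 / 2) ^ (n + 2) / (max (K n) 0 + 1), fun n => by positivity, ?_, fun n => ?_⟩
  · refine squeeze_zero (fun n => by positivity)
      (fun n => div_le_self (by positivity) (by linarith [le_max_right (K n) 0]))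
      ((tendsto_pow_atTop_nhds_zero_of_lt_one (by norm_num) (by norm_num)).comp
        (tendsto_add_atTop_nat 2))
  · calc _ ≤ (1 / 2) ^ (n + 2) / (max (K n) 0 + 1) * (max (K n) 0 + 1) := by
          gcongr; linarith [le_max_left (K n) 0]
      _ = _ := div_mul_cancel₀ _ (by positivity)

lemma exists_strictMono_pos_ge (p : ℕ → ℕ) :
    ∃ M : ℕ → ℕ, StrictMono M ∧ (∀ n, 0 < M n) ∧ ∀ n, p n ≤ M n := by
  refine ⟨fun n => ∑ k ∈ range (n + 1), p k + n + 1,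
    strictMono_nat_of_lt_succ fun n => ?_, fun n => Nat.succ_pos _, fun n => ?_⟩
  · simp only [sum_range_succ _ (n + 1)]; omega
  · dsimp only
    have := single_le_sum (fun k _ => Nat.zero_le (p k)) (self_mem_range_succ n)
    omega

section Sequences

variable {X Z W : Type*} [NormedAddCommGroup X] [NormedSpace ℝ X]
  [NormedAddCommGroup Z] [NormedSpace ℝ Z] [NormedAddCommGroup W] [NormedSpace ℝ W]

lemma SCDominates.exists_norm_sum_le {z : ℕ → Z} {xt : ℕ → W} (hsc : SCDominates z xt)
    {η : ℝ} (hη : 0 < η) :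
    ∃ κ, ∀ (F : Finset ℕ) (a : ℕ → ℝ) (r : ℝ), 0 < r → (∀ i ∈ F, |a i| ≤ r) →
      ‖∑ i ∈ F, a i • xt i‖ ≤ η * ‖∑ i ∈ F, a i • z i‖ + κ * r := by
  obtain ⟨ε, hε, hdom⟩ := hsc η hη
  refine ⟨η / ε, fun F a r hr ha => ?_⟩
  set t := ‖∑ i ∈ F, a i • z i‖ + r / ε
  have ht : 0 < t := by positivity
  have hb_small : ∀ i, |(F : Set ℕ).indicator (fun i => t⁻¹ * a i) i| ≤ ε := fun i => by
    by_cases hi : i ∈ F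
    · rw [Set.indicator_of_mem hi, abs_mul, abs_inv, abs_of_pos ht, inv_mul_le_iff₀ ht]
      calc |a i| ≤ r := ha i hi
        _ = ε * (r / ε) := by field_simp
        _ ≤ t * ε := by rw [mul_comm]; gcongr; exact le_add_of_nonneg_left (norm_nonneg _)
    · rw [Set.indicator_of_notMem hi, abs_zero]; exact hε.le
  have hF := subset_range_sup_succ F
  have hz := sum_range_indicator_mul_smul hF t⁻¹ a z
  have hxt := sum_range_indicator_mul_smul hF t⁻¹ a xt
  have hdom' := hdom _ _ hb_small (by
    rw [hz, norm_smul, norm_inv, Real.norm_of_nonneg ht.le, inv_mul_le_one₀ ht]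
    exact le_add_of_nonneg_right (by positivity))
  rw [hxt, norm_smul, norm_inv, Real.norm_of_nonneg ht.le, inv_mul_le_iff₀ ht] at hdom'
  calc ‖∑ i ∈ F, a i • xt i‖ ≤ t * η := hdom'
    _ = η * ‖∑ i ∈ F, a i • z i‖ + η / ε * r := by ring

lemma IsSpreadingModelOf.exists_abs_norm_sub_le {x : ℕ → X} {xt : ℕ → W}
    (hsm : IsSpreadingModelOf xt x) :
    ∃ C, ∀ φ : ℕ → ℕ, StrictMono φ → ∀ (F : Finset ℕ) (a : ℕ → ℝ) (r : ℝ), 0 < r →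
      (∀ i ∈ F, #F ≤ φ i) → (∀ i ∈ F, |a i| ≤ r) →
      |‖∑ i ∈ F, a i • x (φ i)‖ - ‖∑ i ∈ F, a i • xt i‖| ≤ C * r := by
  obtain ⟨ε, -, hanti, -, hkey⟩ := hsm
  refine ⟨3 * ε 0, fun φ hφ F a r hr hFφ ha => ?_⟩
  have hscaled : ∀ i ∈ F, |r⁻¹ * a i| ≤ 1 := fun i hi => by
    rw [abs_mul, abs_inv, abs_of_pos hr, inv_mul_le_one₀ hr]; exact ha i hi
  obtain ⟨k, hk, hkF⟩ := F.exists_strictMono_image_range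
  have hk_mem : ∀ j < #F, k j ∈ F := fun j hj => hkF ▸ mem_image_of_mem k (mem_range.2 hj)
  -- The spreading-model estimate only compares with `xt 0, …, xt (#F - 1)`: compare `x ∘ φ` and
  -- the shifted copy `x (K + ·)` with that compressed sum, and the shifted copy with `xt` on `F`.
  have hcompress : ∀ g : ℕ → ℕ, StrictMono g → (∀ i ∈ F, #F ≤ g i) →
      |‖r⁻¹ • ∑ i ∈ F, a i • x (g i)‖ - ‖∑ j ∈ range #F, (r⁻¹ * a (k j)) • xt j‖| < ε 0 := by
    intro g hg hgF
    rw [← sum_range_mul_smul_comp hk.injective.injOn hkF]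
    refine (hkey _ (fun j => r⁻¹ * a (k j)) (fun j hj => hscaled _ (hk_mem j hj)) (g ∘ k)
      (hg.comp hk) ?_).trans_le (hanti (Nat.zero_le _))
    rcases (#F).eq_zero_or_pos with h | h
    · rw [h]; exact Nat.zero_le _
    · exact hgF _ (hk_mem 0 h)
  set K := (F.sup id).succ
  have hFK := subset_range_sup_succ F
  have hA := hcompress φ hφ hFφ
  have hB := hcompress (K + ·) (fun _ _ h => by simpa using h)
    (fun _ _ => (card_le_card hFK).trans_eq (card_range K) |>.trans le_self_add)
  have hC := hkey K ((F : Set ℕ).indicator fun i => r⁻¹ * a i)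
    (fun i _ => by
      by_cases hi : i ∈ F
      · rw [Set.indicator_of_mem hi]; exact hscaled i hi
      · rw [Set.indicator_of_notMem hi, abs_zero]; exact zero_le_one)
    (K + ·) (fun _ _ h => by simpa using h) (by simp)
  rw [sum_range_indicator_mul_smul hFK, sum_range_indicator_mul_smul hFK] at hC
  simp only [norm_smul, norm_inv, Real.norm_of_nonneg hr.le] at hA hB hC
  have hKε := hanti (Nat.zero_le K)
  have hdiff : |r⁻¹ * (‖∑ i ∈ F, a i • x (φ i)‖ - ‖∑ i ∈ F, a i • xt i‖)| < 3 * ε 0 := by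
    rw [mul_sub]
    rw [abs_sub_lt_iff] at hA hB hC ⊢
    constructor <;> linarith
  rw [abs_mul, abs_inv, abs_of_pos hr, inv_mul_lt_iff₀ hr] at hdiff
  linarith

lemma card_filter_le_of_strictMono {x : ℕ → X} {ρ : ℝ} {M : ℕ}
    (hM : ∀ (N : ℕ) (b : ℕ → ℝ), ‖∑ i ∈ range N, b i • x i‖ = 1 → #{i ∈ range N | ρ ≤ |b i|} ≤ M)
    {φ : ℕ → ℕ} (hφ : StrictMono φ) (N : ℕ) (a : ℕ → ℝ)
    (hv : ‖∑ i ∈ range N, a i • x (φ i)‖ ≠ 0) :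
    #{i ∈ range N | ρ * ‖∑ i ∈ range N, a i • x (φ i)‖ ≤ |a i|} ≤ M := by
  set v := ‖∑ i ∈ range N, a i • x (φ i)‖
  have hv_pos : 0 < v := (norm_nonneg _).lt_of_ne' hv
  set G := (range N).image φ
  have hG : G ⊆ range (φ N) := by
    simp only [G, image_subset_iff, mem_range]; exact fun i hi => hφ hi
  set b := (G : Set ℕ).indicator fun j => v⁻¹ * Function.extend φ a 0 j with hb_def
  have hb : ∀ i < N, b (φ i) = v⁻¹ * a i := fun i hi => by
    rw [hb_def, Set.indicator_of_mem (mem_image_of_mem φ (mem_range.2 hi)),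
      hφ.injective.extend_apply]
  have hsum : ∑ j ∈ range (φ N), b j • x j = v⁻¹ • ∑ i ∈ range N, a i • x (φ i) := by
    rw [sum_range_indicator_mul_smul hG, sum_image fun i _ j _ h => hφ.injective h]
    simp_rw [hφ.injective.extend_apply]
  refine le_trans (card_le_card_of_injOn φ (fun i hi => ?_) hφ.injective.injOn) (hM (φ N) b ?_)
  · simp only [coe_filter, mem_range, Set.mem_ofPred_eq] at hi ⊢
    refine ⟨hφ hi.1, ?_⟩
    rw [hb i hi.1, abs_mul, abs_inv, abs_of_pos hv_pos, le_inv_mul_iff₀ hv_pos, mul_comm]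
    exact hi.2
  · rw [hsum, norm_smul, norm_inv, norm_norm, inv_mul_cancel₀ hv]

lemma norm_sum_smul_le_of_card_le {x : ℕ → X} {z : ℕ → Z} {CX cz Q : ℝ}
    (hx : ∀ i, ‖x i‖ ≤ CX) (hcz : 0 < cz) (hz : ∀ i, cz ≤ ‖z i‖)
    {J : Finset ℕ} {m : ℕ} (hJ : #J ≤ m) (a : ℕ → ℝ) (hQ : 0 ≤ Q)
    (haQ : ∀ i ∈ J, ‖a i • z i‖ ≤ Q) :
    ‖∑ i ∈ J, a i • x i‖ ≤ m * CX / cz * Q := by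
  have hCX : 0 ≤ CX := (norm_nonneg _).trans (hx 0)
  have hterm : ∀ i ∈ J, ‖a i • x i‖ ≤ Q / cz * CX := fun i hi => by
    rw [norm_smul]
    refine mul_le_mul ?_ (hx i) (norm_nonneg _) (by positivity)
    rw [le_div_iff₀ hcz]
    calc ‖a i‖ * cz ≤ ‖a i‖ * ‖z i‖ := by gcongr; exact hz i
      _ = ‖a i • z i‖ := (norm_smul _ _).symm
      _ ≤ Q := haQ i hi
  calc ‖∑ i ∈ J, a i • x i‖ ≤ #J • (Q / cz * CX) :=
        (norm_sum_le _ _).trans (sum_le_card_nsmul _ _ _ hterm)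
    _ ≤ m * (Q / cz * CX) := by rw [nsmul_eq_mul]; gcongr
    _ = m * CX / cz * Q := by ring

lemma norm_sum_le_of_abs_le {x : ℕ → X} {z : ℕ → Z} {φ : ℕ → ℕ} (hφ : Monotone φ)
    {CX η κ : ℝ} (hx : ∀ i, ‖x i‖ ≤ CX)
    (hdom : ∀ (F : Finset ℕ) (a : ℕ → ℝ) (r : ℝ), 0 < r → (∀ i ∈ F, #F ≤ φ i) →
      (∀ i ∈ F, |a i| ≤ r) → ‖∑ i ∈ F, a i • x (φ i)‖ ≤ η * ‖∑ i ∈ F, a i • z i‖ + κ * r)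
    (n : ℕ) {J : Finset ℕ} (hJ : #J ≤ φ n) (a : ℕ → ℝ) {r : ℝ} (hr : 0 < r)
    (ha : ∀ i ∈ J, |a i| ≤ r) :
    ‖∑ i ∈ J, a i • x (φ i)‖ ≤ η * ‖∑ i ∈ J with n ≤ i, a i • z i‖ + (n * CX + κ) * r := by
  have hhead : ‖∑ i ∈ J with ¬ n ≤ i, a i • x (φ i)‖ ≤ n * CX * r := by
    have hcard : #{i ∈ J | ¬ n ≤ i} ≤ n :=
      (card_le_card fun i hi => mem_range.2 (not_le.1 (mem_filter.1 hi).2)).trans_eq (card_range n)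
    have hterm : ∀ i ∈ J.filter (¬ n ≤ ·), ‖a i • x (φ i)‖ ≤ r * CX := fun i hi => by
      rw [norm_smul, Real.norm_eq_abs]
      exact mul_le_mul (ha i (mem_filter.1 hi).1) (hx _) (norm_nonneg _) hr.le
    calc ‖∑ i ∈ J with ¬ n ≤ i, a i • x (φ i)‖ ≤ #{i ∈ J | ¬ n ≤ i} • (r * CX) :=
          (norm_sum_le _ _).trans (sum_le_card_nsmul _ _ _ hterm)
      _ ≤ n * (r * CX) := by
          have hCX : 0 ≤ CX := (norm_nonneg _).trans (hx 0)
          rw [nsmul_eq_mul]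
          gcongr
      _ = n * CX * r := by ring
  have htail := hdom {i ∈ J | n ≤ i} a r hr
    (fun i hi => ((card_le_card (filter_subset _ _)).trans hJ).trans (hφ (mem_filter.1 hi).2))
    (fun i hi => ha i (mem_filter.1 hi).1)
  rw [← sum_filter_add_sum_filter_not J (n ≤ ·)]
  calc _ ≤ _ := norm_add_le _ _
    _ ≤ η * ‖∑ i ∈ J with n ≤ i, a i • z i‖ + κ * r + n * CX * r := add_le_add htail hhead
    _ = _ := by ring

lemma norm_sum_le_of_levels {x : ℕ → X} {z : ℕ → Z} {φ : ℕ → ℕ} (hφ : Monotone φ)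
    {CX cz : ℝ} (hx : ∀ i, ‖x i‖ ≤ CX) (hcz : 0 < cz) (hz : ∀ i, cz ≤ ‖z i‖)
    {δ κ ρ : ℕ → ℝ}
    (hdom : ∀ n, 0 < n → ∀ (F : Finset ℕ) (a : ℕ → ℝ) (r : ℝ), 0 < r → (∀ i ∈ F, #F ≤ φ i) →
      (∀ i ∈ F, |a i| ≤ r) →
      ‖∑ i ∈ F, a i • x (φ i)‖ ≤ (1 / 2) ^ (n + 2) * δ n * ‖∑ i ∈ F, a i • z i‖ + κ n * r)
    (hρ : ∀ n, 0 < n → 0 < ρ n) (hρ_lim : Tendsto ρ atTop (nhds 0))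
    (hρκ : ∀ n, 0 < n → ρ n * (n * CX + κ n) ≤ (1 / 2) ^ (n + 2))
    (hcard : ∀ n N (a : ℕ → ℝ), ‖∑ i ∈ range N, a i • x (φ i)‖ ≠ 0 →
      #{i ∈ range N | ρ (n + 1) * ‖∑ i ∈ range N, a i • x (φ i)‖ ≤ |a i|} ≤ φ n)
    (N : ℕ) (a : ℕ → ℝ) {Q : ℝ}
    (hQ₀ : ∀ i, 2 * φ 0 * CX / cz * ‖a i • z i‖ ≤ Q)
    (hQ : ∀ n, 0 < n → ∀ F : Finset ℕ, (∀ i ∈ F, n ≤ i) → #F ≤ φ n →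
      δ n * ‖∑ i ∈ F, a i • z i‖ ≤ Q) :
    ‖∑ i ∈ range N, a i • x (φ i)‖ ≤ Q := by
  have hCX : 0 ≤ CX := (norm_nonneg _).trans (hx 0)
  have hQ_nonneg : 0 ≤ Q := (by positivity : 0 ≤ 2 * φ 0 * CX / cz * ‖a 0 • z 0‖).trans (hQ₀ 0)
  set v := ‖∑ i ∈ range N, a i • x (φ i)‖ with hv_def
  rcases eq_or_ne v 0 with hv | hv
  · rw [hv]; exact hQ_nonneg
  have hv_pos : 0 < v := (norm_nonneg _).lt_of_ne' hv
  set s := {i ∈ range N | a i ≠ 0}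
  have hs : ∑ i ∈ s, a i • x (φ i) = ∑ i ∈ range N, a i • x (φ i) :=
    sum_filter_of_ne fun i _ h ha => h (by rw [ha, zero_smul])
  choose! ℓ hℓ using fun i (hi : i ∈ s) =>
    exists_apply_succ_le_lt_apply (by simpa using hρ_lim.mul_const v)
      (abs_pos.2 (mem_filter.1 hi).2)
  have hlevel_card : ∀ n, #{i ∈ s | ℓ i = n} ≤ φ n := fun n =>
    (card_le_card fun i hi => by
      obtain ⟨his, rfl⟩ := mem_filter.1 hi
      exact mem_filter.2 ⟨(mem_filter.1 his).1, (hℓ i his).1⟩).trans (hcard n N a hv)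
  rw [hv_def, ← hs]
  refine norm_sum_le_of_fiber_bounds s _ ℓ ?_ fun n hn => ?_
  · rcases {i ∈ s | ℓ i = 0}.eq_empty_or_nonempty with hempty | hne
    · rw [hempty, sum_empty, norm_zero]; linarith
    obtain ⟨i₀, -, hmax⟩ := exists_max_image _ (fun i => ‖a i • z i‖) hne
    calc _ ≤ φ 0 * CX / cz * ‖a i₀ • z i₀‖ :=
          norm_sum_smul_le_of_card_le (fun i => hx (φ i)) hcz hz (hlevel_card 0) a
            (norm_nonneg _) hmax
      _ = 2 * φ 0 * CX / cz * ‖a i₀ • z i₀‖ / 2 := by ring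
      _ ≤ Q / 2 := by linarith [hQ₀ i₀]
  · rw [hs, ← hv_def]
    have hr : 0 < ρ n * v := mul_pos (hρ n hn) hv_pos
    have hlevel := norm_sum_le_of_abs_le hφ hx (hdom n hn) n (hlevel_card n) a hr
      fun i hi => by obtain ⟨his, rfl⟩ := mem_filter.1 hi; exact ((hℓ i his).2 hn).le
    have hhigh := hQ n hn _ (fun i hi => (mem_filter.1 hi).2)
      ((card_le_card (filter_subset _ _)).trans (hlevel_card n))
    have hsmall : (n * CX + κ n) * (ρ n * v) ≤ (1 / 2) ^ (n + 2) * v :=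
      calc _ = ρ n * (n * CX + κ n) * v := by ring
        _ ≤ _ := by gcongr; exact hρκ n hn
    calc _ ≤ _ := hlevel
      _ ≤ (1 / 2) ^ (n + 2) * Q + (1 / 2) ^ (n + 2) * v := by
          rw [mul_assoc]; exact add_le_add (mul_le_mul_of_nonneg_left hhigh (by positivity)) hsmall
      _ = _ := by ring

lemma bddAbove_weighted_norm_sum (w : ℕ → ℝ) (M : ℕ → ℕ) (z : ℕ → Z) {N : ℕ} {a : ℕ → ℝ}
    (ha : ∀ i, N ≤ i → a i = 0) :
    BddAbove {r : ℝ | ∃ (n : ℕ) (F : Finset ℕ), (∀ m ∈ F, n ≤ m) ∧ #F ≤ M n ∧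
      r = w n * ‖∑ i ∈ F, a i • z i‖} := by
  refine ⟨(∑ n ∈ range N, |w n|) * ∑ i ∈ range N, ‖a i • z i‖, ?_⟩
  rintro r ⟨n, F, hF, -, rfl⟩
  have hF_sum : ∑ i ∈ F, a i • z i = ∑ i ∈ F with i < N, a i • z i :=
    (sum_filter_of_ne fun i _ h =>
      by_contra fun hi => h (by rw [ha i (not_lt.1 hi), zero_smul])).symm
  rcases lt_or_ge n N with hn | hn
  · calc w n * ‖∑ i ∈ F, a i • z i‖ ≤ |w n| * ∑ i ∈ range N, ‖a i • z i‖ := by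
          rw [hF_sum]
          refine mul_le_mul (le_abs_self _) ((norm_sum_le _ _).trans ?_) (norm_nonneg _)
            (abs_nonneg _)
          exact sum_le_sum_of_subset_of_nonneg (fun i hi => mem_range.2 (mem_filter.1 hi).2)
            fun _ _ _ => norm_nonneg _
      _ ≤ _ := mul_le_mul_of_nonneg_right
          (single_le_sum (fun k _ => abs_nonneg (w k)) (mem_range.2 hn))
          (sum_nonneg fun _ _ => norm_nonneg _)
  · rw [hF_sum, filter_false_of_mem fun i hi => not_lt.2 (hn.trans (hF i hi)), sum_empty,
      norm_zero, mul_zero]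
    positivity

end Sequences

theorem statement_11_general
    {X Z W : Type*} [NormedAddCommGroup X] [NormedSpace ℝ X]
    [NormedAddCommGroup Z] [NormedSpace ℝ Z]
    [NormedAddCommGroup W] [NormedSpace ℝ W]
    (x : ℕ → X) (hxsn : IsSeminormalized x) (hP2 : PropertyP2 x)
    (z : ℕ → Z) (hzsn : IsSeminormalized z)
    (xt : ℕ → W) (hsm : IsSpreadingModelOf xt x) (hsc : SCDominates z xt)
    -- the given sequence (δ_n)_{n ≥ 1} of positive reals (δ₀ will be produced below)
    (δ : ℕ → ℝ) (hδ : ∀ n, 1 ≤ n → 0 < δ n) :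
    ∃ δ₀ : ℝ, 0 < δ₀ ∧
    ∃ M : ℕ → ℕ, StrictMono M ∧ (∀ n, 0 < M n) ∧
    ∃ φ : ℕ → ℕ, StrictMono φ ∧
      ∀ (N : ℕ) (a : ℕ → ℝ), (∀ i, N ≤ i → a i = 0) →
        ‖∑ i ∈ Finset.range N, a i • x (φ i)‖ ≤
          sSup {r : ℝ | ∃ (n : ℕ) (F : Finset ℕ), (∀ m ∈ F, n ≤ m) ∧ F.card ≤ M n ∧
            r = (Function.update δ 0 δ₀) n * ‖∑ i ∈ F, a i • z i‖} := by
  obtain ⟨cx, CX, hcx, hx⟩ := hxsn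
  have hCX : 0 < CX := hcx.trans_le ((hx 0).1.trans (hx 0).2)
  obtain ⟨cz, _, hcz, hz⟩ := hzsn
  obtain ⟨C, hspread⟩ := hsm.exists_abs_norm_sub_le
  choose! κ hκ using fun η (hη : 0 < η) => hsc.exists_norm_sum_le hη
  obtain ⟨ρ, hρ, hρ_lim, hρκ⟩ :=
    exists_pos_tendsto_zero_mul_le fun n => n * CX + (C + κ ((1 / 2) ^ (n + 2) * δ n))
  choose p hp using fun n => hP2 (ρ (n + 1)) (hρ _)
  obtain ⟨M, hM, hM_pos, hpM⟩ := exists_strictMono_pos_ge p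
  have hM0 : (0 : ℝ) < M 0 := Nat.cast_pos.2 (hM_pos 0)
  refine ⟨2 * M 0 * CX / cz, by positivity, M, hM, hM_pos, M, hM, fun N a ha => ?_⟩
  have hS := bddAbove_weighted_norm_sum (Function.update δ 0 (2 * M 0 * CX / cz)) M z ha
  refine norm_sum_le_of_levels hM.monotone (fun i => (hx i).2) hcz (fun i => (hz i).1)
    (fun n hn F b r hr hF hb => ?_) (fun n _ => hρ n) hρ_lim (fun n _ => hρκ n)
    (fun n N b hv => (card_filter_le_of_strictMono (hp n) hM N b hv).trans (hpM n)) N a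
    (fun i => le_csSup hS ⟨0, {i}, by simp, (card_singleton i).trans_le (hM_pos 0), by simp⟩)
    (fun n hn F hF hFM => le_csSup hS ⟨n, F, hF, hFM, by rw [Function.update_of_ne hn.ne']⟩)
  have hxt := hκ ((1 / 2) ^ (n + 2) * δ n) (by have := hδ n hn; positivity) F b r hr hb
  linarith [(abs_sub_le_iff.1 (hspread M hM F b r hr hF hb)).1]

/-- Lemma 3.2. -/
theorem statement_11
    {X Z W : Type*} [NormedAddCommGroup X] [NormedSpace ℝ X] [CompleteSpace X]
    [NormedAddCommGroup Z] [NormedSpace ℝ Z]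
    [NormedAddCommGroup W] [NormedSpace ℝ W]
    (x : ℕ → X) (hxsn : IsSeminormalized x) (hxb : IsBasicSeq x) (hP2 : PropertyP2 x)
    (z : ℕ → Z) (hzsn : IsSeminormalized z) (hzb : IsBasicSeq z)
    (xt : ℕ → W) (hsm : IsSpreadingModelOf xt x) (hsc : SCDominates z xt)
    -- the given sequence (δ_n)_{n ≥ 1} of positive reals (δ₀ will be produced below)
    (δ : ℕ → ℝ) (hδ : ∀ n, 1 ≤ n → 0 < δ n) :
    ∃ δ₀ : ℝ, 0 < δ₀ ∧
    ∃ M : ℕ → ℕ, StrictMono M ∧ (∀ n, 0 < M n) ∧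
    ∃ φ : ℕ → ℕ, StrictMono φ ∧
      ∀ (N : ℕ) (a : ℕ → ℝ), (∀ i, N ≤ i → a i = 0) →
        ‖∑ i ∈ Finset.range N, a i • x (φ i)‖ ≤
          sSup {r : ℝ | ∃ (n : ℕ) (F : Finset ℕ), (∀ m ∈ F, n ≤ m) ∧ F.card ≤ M n ∧
            r = (Function.update δ 0 δ₀) n * ‖∑ i ∈ F, a i • z i‖} :=
  statement_11_general x hxsn hP2 z hzsn xt hsm hsc δ hδ

end
end

section
/- Let (z_i) be a seminormalized basic sequence having a spreading model (z̃_i). If (z_i) has Property P1, then (z̃_i) has Property P1; and if (z_i) has Property P2, then (z̃_i) has Property P2. -/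
open Filter

noncomputable section

/-!
Padding a coefficient vector with zeros turns the defining estimate of a spreading model for
`n` terms into the one for any `m ≥ n` terms, whose error `ε m` tends to zero. Hence
`‖∑ a i • z̃ i‖ = lim_m ‖∑ a i • z (m + i)‖` for every finitely supported `a`, and both properties
pass to this limit: P1 because shifted sets have the same cardinality, P2 because a coefficient
vector normalized for `z̃` is, for large `m`, nearly normalized for `z (m + ·)`.
-/

open Topology Finset

lemma sum_range_ite_mem_smul {E : Type*} [AddCommMonoid E] [Module ℝ E] {s : Finset ℕ} {m : ℕ}
    (hs : s ⊆ range m) (a : ℕ → ℝ) (v : ℕ → E) :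
    ∑ i ∈ range m, (if i ∈ s then a i else 0) • v i = ∑ i ∈ s, a i • v i := by
  simp only [ite_smul, zero_smul, sum_ite_mem, inter_eq_right.mpr hs]

lemma sum_range_add_ite_le_smul {E : Type*} [AddCommMonoid E] [Module ℝ E] (m N : ℕ)
    (a : ℕ → ℝ) (v : ℕ → E) :
    ∑ j ∈ range (m + N), (if m ≤ j then a (j - m) else 0) • v j =
      ∑ i ∈ range N, a i • v (m + i) := by
  rw [sum_range_add, sum_eq_zero fun j hj => by simp [not_le.mpr (mem_range.mp hj)], zero_add]
  simp

lemma norm_sum_smul_eq_mul_norm_sum_div {E : Type*} [SeminormedAddCommGroup E] [NormedSpace ℝ E]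
    (s : Finset ℕ) (a : ℕ → ℝ) (v : ℕ → E) {t : ℝ} (ht : 0 < t) :
    ‖∑ i ∈ s, a i • v i‖ = t * ‖∑ i ∈ s, (a i / t) • v i‖ := by
  have hsum : ∑ i ∈ s, a i • v i = t • ∑ i ∈ s, (a i / t) • v i := by
    simp only [smul_sum, smul_smul, mul_div_cancel₀ _ ht.ne']
  rw [hsum, norm_smul, Real.norm_of_nonneg ht.le]

namespace IsSpreadingModelOf

variable {X W : Type*} [NormedAddCommGroup X] [NormedSpace ℝ X]
  [NormedAddCommGroup W] [NormedSpace ℝ W] {xt : ℕ → W} {x : ℕ → X}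

lemma tendsto_norm_sum_of_abs_le_one (h : IsSpreadingModelOf xt x) (s : Finset ℕ) {a : ℕ → ℝ}
    (ha : ∀ i ∈ s, |a i| ≤ 1) :
    Tendsto (fun m => ‖∑ i ∈ s, a i • x (m + i)‖) atTop (𝓝 ‖∑ i ∈ s, a i • xt i‖) := by
  obtain ⟨ε, -, -, hε, hx⟩ := h
  obtain ⟨n, hn⟩ := s.exists_nat_subset_range
  refine tendsto_iff_dist_tendsto_zero.2
    (squeeze_zero' (Eventually.of_forall fun _ => dist_nonneg) ?_ hε)
  filter_upwards [eventually_ge_atTop n] with m hm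
  have hsm : s ⊆ range m := hn.trans (range_subset_range.2 hm)
  have hpad := hx m (fun i => if i ∈ s then a i else 0)
    (fun i _ => by split_ifs with hi <;> simp [ha, hi]) (m + ·) (strictMono_id.const_add m)
    (m.le_add_right 0)
  rw [sum_range_ite_mem_smul hsm, sum_range_ite_mem_smul hsm] at hpad
  exact (Real.dist_eq _ _).trans_le hpad.le

theorem tendsto_norm_sum (h : IsSpreadingModelOf xt x) (s : Finset ℕ) (a : ℕ → ℝ) :
    Tendsto (fun m => ‖∑ i ∈ s, a i • x (m + i)‖) atTop (𝓝 ‖∑ i ∈ s, a i • xt i‖) := by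
  set t := 1 + ∑ i ∈ s, |a i|
  have ht : 0 < t := by positivity
  have hat : ∀ i ∈ s, |a i / t| ≤ 1 := fun i hi => by
    rw [abs_div, abs_of_pos ht, div_le_one ht]
    linarith [single_le_sum (fun j _ => abs_nonneg (a j)) hi]
  simp only [norm_sum_smul_eq_mul_norm_sum_div s a _ ht]
  exact (h.tendsto_norm_sum_of_abs_le_one s hat).const_mul t

theorem propertyP1 (h : IsSpreadingModelOf xt x) (hx : PropertyP1 x) : PropertyP1 xt := by
  intro R
  obtain ⟨N, hN⟩ := hx R
  refine ⟨N, fun A hA => ge_of_tendsto (by simpa using h.tendsto_norm_sum A 1) ?_⟩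
  refine Eventually.of_forall fun m => ?_
  simpa [sum_map] using hN (A.map (addLeftEmbedding m)) (by rwa [card_map])

theorem propertyP2 (h : IsSpreadingModelOf xt x) (hx : PropertyP2 x) : PropertyP2 xt := by
  intro ρ hρ
  obtain ⟨M, hM⟩ := hx (ρ / 2) (half_pos hρ)
  refine ⟨M, fun N a ha => ?_⟩
  have hlim := h.tendsto_norm_sum (range N) a
  rw [ha] at hlim
  obtain ⟨m, hs0, hs2⟩ := (hlim.eventually (Ioo_mem_nhds one_pos one_lt_two)).exists
  set s := ‖∑ i ∈ range N, a i • x (m + i)‖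
  have hb : ‖∑ j ∈ range (m + N), (if m ≤ j then a (j - m) / s else 0) • x j‖ = 1 := by
    rw [sum_range_add_ite_le_smul m N (a · / s)]
    have := norm_sum_smul_eq_mul_norm_sum_div (range N) a (x <| m + ·) hs0
    exact (mul_eq_left₀ hs0.ne').mp this.symm
  calc #{i ∈ range N | ρ ≤ |a i|}
      ≤ #{j ∈ range (m + N) | ρ / 2 ≤ |if m ≤ j then a (j - m) / s else 0|} := by
        refine card_le_card_of_injOn (m + ·) (fun i hi => ?_) (add_right_injective m).injOn
        simp only [coe_filter, mem_range, Set.mem_ofPred_eq] at hi ⊢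
        refine ⟨by omega, ?_⟩
        rw [if_pos (m.le_add_right i), Nat.add_sub_cancel_left, abs_div, abs_of_pos hs0,
          le_div_iff₀ hs0]
        nlinarith
    _ ≤ M := hM _ _ hb

end IsSpreadingModelOf

theorem statement_15_general
    {Z V : Type*} [NormedAddCommGroup Z] [NormedSpace ℝ Z]
    [NormedAddCommGroup V] [NormedSpace ℝ V]
    (z : ℕ → Z)
    (zt : ℕ → V) (hzsm : IsSpreadingModelOf zt z) :
    (PropertyP1 z → PropertyP1 zt) ∧ (PropertyP2 z → PropertyP2 zt) :=
  ⟨hzsm.propertyP1, hzsm.propertyP2⟩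

/-- Proposition 3.7 (a). -/
theorem statement_15
    {Z V : Type*} [NormedAddCommGroup Z] [NormedSpace ℝ Z] [CompleteSpace Z]
    [NormedAddCommGroup V] [NormedSpace ℝ V]
    (z : ℕ → Z) (hzsn : IsSeminormalized z) (hzb : IsBasicSeq z)
    (zt : ℕ → V) (hzsm : IsSpreadingModelOf zt z) :
    (PropertyP1 z → PropertyP1 zt) ∧ (PropertyP2 z → PropertyP2 zt) :=
  statement_15_general z zt hzsm

end
end

section
/- If an unconditional seminormalized basic sequence has Property P1, then it has Property P2. -/
/-
Let `x = ∑ a i • z i` have norm `1` and let `A` be the set of indices with `ρ ≤ |a i|`.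
Splitting by sign, unconditionality (constant `C`) bounds every subset sum
`‖∑_{i ∈ B} |a i| • z i‖`, `B ⊆ A`, by `2C`. Now `ρ • z i = (ρ / |a i|) • (|a i| • z i)` with
`ρ / |a i| ∈ [0, 1]`, and sums `∑_{i ∈ A} t i • v i` with `t ∈ [0, 1]^A` are convex combinations
of subset sums of the `v i`, so `‖∑_{i ∈ A} z i‖ ≤ 2C/ρ`. Property P1 then bounds `#A`.
-/

open Filter

noncomputable section

open Finset

theorem Convex.add_sum_smul_mem {E : Type*} [AddCommGroup E] [Module ℝ E] {S : Set E}
    (hS : Convex ℝ S) (v : ℕ → E) (t : ℕ → ℝ) (A : Finset ℕ) (w : E)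
    (ht : ∀ i ∈ A, 0 ≤ t i ∧ t i ≤ 1) (hB : ∀ B ⊆ A, w + ∑ i ∈ B, v i ∈ S) :
    w + ∑ i ∈ A, t i • v i ∈ S := by
  induction A using Finset.induction_on generalizing w with
  | empty => simpa using hB ∅ subset_rfl
  | @insert j A hjA ih =>
    obtain ⟨htj0, htj1⟩ := ht j (mem_insert_self j A)
    have ht' : ∀ i ∈ A, 0 ≤ t i ∧ t i ≤ 1 := fun i hi => ht i (mem_insert_of_mem hi)
    have with_j : (w + v j) + ∑ i ∈ A, t i • v i ∈ S := by
      refine ih (w + v j) ht' fun B hBA => ?_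
      rw [add_assoc, ← sum_insert fun hj => hjA (hBA hj)]
      exact hB _ (insert_subset_insert j hBA)
    have without_j : w + ∑ i ∈ A, t i • v i ∈ S :=
      ih w ht' fun B hBA => hB B (hBA.trans (subset_insert j A))
    have hcomb : w + ∑ i ∈ insert j A, t i • v i
        = t j • ((w + v j) + ∑ i ∈ A, t i • v i) + (1 - t j) • (w + ∑ i ∈ A, t i • v i) := by
      rw [sum_insert hjA]
      module
    rw [hcomb]
    exact hS with_j without_j htj0 (sub_nonneg.2 htj1) (by ring)

section Unconditional

variable {Z : Type*} [NormedAddCommGroup Z] [NormedSpace ℝ Z]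

theorem norm_sum_abs_smul_le {z : ℕ → Z} {C : ℝ} {a : ℕ → ℝ} {s : Finset ℕ}
    (hC : ∀ A ⊆ s, ‖∑ i ∈ A, a i • z i‖ ≤ C * ‖∑ i ∈ s, a i • z i‖) {B : Finset ℕ}
    (hBs : B ⊆ s) : ‖∑ i ∈ B, |a i| • z i‖ ≤ 2 * C * ‖∑ i ∈ s, a i • z i‖ := by
  have hsplit : ∑ i ∈ B, |a i| • z i
      = ∑ i ∈ B with 0 ≤ a i, a i • z i - ∑ i ∈ B with ¬ 0 ≤ a i, a i • z i := by
    rw [← sum_filter_add_sum_filter_not B (fun i => 0 ≤ a i), sub_eq_add_neg,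
      ← sum_neg_distrib]
    congr 1
    · exact sum_congr rfl fun i hi => by rw [abs_of_nonneg (mem_filter.1 hi).2]
    · exact sum_congr rfl fun i hi => by
        rw [abs_of_neg (not_le.1 (mem_filter.1 hi).2), neg_smul]
  calc ‖∑ i ∈ B, |a i| • z i‖
      ≤ ‖∑ i ∈ B with 0 ≤ a i, a i • z i‖ + ‖∑ i ∈ B with ¬ 0 ≤ a i, a i • z i‖ := by
        rw [hsplit]; exact norm_sub_le _ _
    _ ≤ C * ‖∑ i ∈ s, a i • z i‖ + C * ‖∑ i ∈ s, a i • z i‖ :=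
        add_le_add (hC _ ((filter_subset _ _).trans hBs))
          (hC _ ((filter_subset _ _).trans hBs))
    _ = 2 * C * ‖∑ i ∈ s, a i • z i‖ := by ring

theorem norm_sum_le_of_forall_le_abs {z : ℕ → Z} {C : ℝ} {a : ℕ → ℝ} {s : Finset ℕ}
    (hC : ∀ A ⊆ s, ‖∑ i ∈ A, a i • z i‖ ≤ C * ‖∑ i ∈ s, a i • z i‖) {ρ : ℝ} (hρ : 0 < ρ)
    {A : Finset ℕ} (hAs : A ⊆ s) (hA : ∀ i ∈ A, ρ ≤ |a i|) :
    ‖∑ i ∈ A, z i‖ ≤ 2 * C * ‖∑ i ∈ s, a i • z i‖ / ρ := by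
  have hconv : (0 : Z) + ∑ i ∈ A, (ρ / |a i|) • (|a i| • z i)
      ∈ Metric.closedBall 0 (2 * C * ‖∑ i ∈ s, a i • z i‖) := by
    refine (convex_closedBall 0 _).add_sum_smul_mem _ _ A 0 (fun i hi => ?_) fun B hBA => ?_
    · have hai := hA i hi
      exact ⟨by positivity, (div_le_one (hρ.trans_le hai)).2 hai⟩
    · rw [zero_add, mem_closedBall_zero_iff]
      exact norm_sum_abs_smul_le hC (hBA.trans hAs)
  have hrescale : ∑ i ∈ A, (ρ / |a i|) • (|a i| • z i) = ρ • ∑ i ∈ A, z i := by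
    rw [smul_sum]
    refine sum_congr rfl fun i hi => ?_
    have hai : |a i| ≠ 0 := (hρ.trans_le (hA i hi)).ne'
    rw [smul_smul, div_mul_cancel₀ ρ hai]
  rw [zero_add, hrescale, mem_closedBall_zero_iff, norm_smul, Real.norm_of_nonneg hρ.le]
    at hconv
  rw [le_div_iff₀ hρ, mul_comm]
  exact hconv

theorem IsUnconditionalSeq.propertyP2_of_propertyP1 {z : ℕ → Z} (hu : IsUnconditionalSeq z)
    (h : PropertyP1 z) : PropertyP2 z := by
  obtain ⟨C, -, hC⟩ := hu
  intro ρ hρ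
  obtain ⟨M, hM⟩ := h (2 * C / ρ + 1)
  refine ⟨M, fun n a ha => ?_⟩
  by_contra! hcard
  have hsmall := norm_sum_le_of_forall_le_abs (s := range n) (fun A hA => hC a _ A hA) hρ
    (filter_subset _ _) fun i hi => (mem_filter.1 hi).2
  rw [ha, mul_one] at hsmall
  linarith [hM _ hcard.le]

end Unconditional

theorem statement_17_general
    {Z : Type*} [NormedAddCommGroup Z] [NormedSpace ℝ Z]
    (z : ℕ → Z)
    (hu : IsUnconditionalSeq z)
    (h : PropertyP1 z) : PropertyP2 z :=
  hu.propertyP2_of_propertyP1 h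

/-- Proposition 3.7 (c). -/
theorem statement_17
    {Z : Type*} [NormedAddCommGroup Z] [NormedSpace ℝ Z] [CompleteSpace Z]
    (z : ℕ → Z) (hzsn : IsSeminormalized z) (hzb : IsBasicSeq z)
    (hu : IsUnconditionalSeq z)
    (h : PropertyP1 z) : PropertyP2 z :=
  statement_17_general z hu h

end
end

section
/- Let (z_i) be a Schreier unconditional seminormalized basic sequence in a Banach space. If (z_i) has Property P1, then there exists a subsequence (z_{n_i}) of (z_i) which has Property P2. -/
open Filter

noncomputable section

def IsSchreierSet (F : Finset ℕ) : Prop :=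
  ∀ m ∈ F, F.card ≤ m

lemma IsSchreierSet.of_subset_of_card_le {F T : Finset ℕ} {K : ℕ} (hTF : T ⊆ F)
    (hF : ∀ m ∈ F, K ≤ m) (hcard : F.card ≤ K) : IsSchreierSet T :=
  fun m hm => (Finset.card_le_card hTF).trans (hcard.trans (hF m (hTF hm)))

lemma Convex.sum_smul_mem_of_forall_subset {E : Type*} [AddCommGroup E] [Module ℝ E]
    {s : Set E} (hs : Convex ℝ s) (v : ℕ → E) (t : ℕ → ℝ) (S : Finset ℕ)
    (hsub : ∀ T ⊆ S, ∑ j ∈ T, v j ∈ s) (ht : ∀ j ∈ S, t j ∈ Set.Icc (0 : ℝ) 1) :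
    ∑ j ∈ S, t j • v j ∈ s := by
  induction S using Finset.induction_on generalizing s with
  | empty => simpa using hsub ∅ (Finset.empty_subset _)
  | insert a S ha ih =>
    have ht' : ∀ j ∈ S, t j ∈ Set.Icc (0 : ℝ) 1 := fun j hj =>
      ht j (Finset.mem_insert_of_mem hj)
    have hw : ∑ j ∈ S, t j • v j ∈ s :=
      ih hs (fun T hT => hsub T (hT.trans (Finset.subset_insert a S))) ht'
    have hvw : v a + ∑ j ∈ S, t j • v j ∈ s := by
      refine ih (s := (fun x => v a + x) ⁻¹' s) (hs.translate_preimage_right (v a))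
        (fun T hT => ?_) ht'
      have haT : a ∉ T := fun h => ha (hT h)
      simpa [Finset.sum_insert haT] using
        hsub (insert a T) (Finset.insert_subset_insert a hT)
    obtain ⟨hta0, hta1⟩ := ht a (Finset.mem_insert_self a S)
    have hcomb := hs hw hvw (sub_nonneg.2 hta1) hta0 (sub_add_cancel 1 (t a))
    rw [Finset.sum_insert ha]
    convert hcomb using 1
    simp only [smul_add, sub_smul, one_smul]
    abel

lemma norm_sum_le_div_of_le_coeff {E : Type*} [NormedAddCommGroup E] [NormedSpace ℝ E]
    (x : ℕ → E) (c : ℕ → ℝ) (F : Finset ℕ) {ρ M : ℝ} (hρ : 0 < ρ)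
    (hc : ∀ j ∈ F, ρ ≤ c j) (hM : ∀ T ⊆ F, ‖∑ j ∈ T, c j • x j‖ ≤ M) :
    ‖∑ j ∈ F, x j‖ ≤ M / ρ := by
  have hcpos : ∀ j ∈ F, 0 < c j := fun j hj => hρ.trans_le (hc j hj)
  have hball := (convex_closedBall (0 : E) M).sum_smul_mem_of_forall_subset
    (fun j => c j • x j) (fun j => ρ / c j) F
    (fun T hT => mem_closedBall_zero_iff.2 (hM T hT))
    (fun j hj => ⟨div_nonneg hρ.le (hcpos j hj).le, (div_le_one (hcpos j hj)).2 (hc j hj)⟩)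
  have hsum : ∑ j ∈ F, (ρ / c j) • c j • x j = ρ • ∑ j ∈ F, x j := by
    rw [Finset.smul_sum]
    refine Finset.sum_congr rfl fun j hj => ?_
    rw [smul_smul, div_mul_cancel₀ ρ (hcpos j hj).ne']
  rw [mem_closedBall_zero_iff, hsum, norm_smul, Real.norm_of_nonneg hρ.le] at hball
  rwa [le_div_iff₀ hρ, mul_comm]

lemma exists_half_subset_norm_sum_le {E : Type*} [NormedAddCommGroup E] [NormedSpace ℝ E]
    (x : ℕ → E) (c : ℕ → ℝ) (F : Finset ℕ) {ρ M : ℝ} (hρ : 0 < ρ)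
    (hc : ∀ j ∈ F, ρ ≤ |c j|) (hM : ∀ T ⊆ F, ‖∑ j ∈ T, c j • x j‖ ≤ M) :
    ∃ G ⊆ F, F.card ≤ 2 * G.card ∧ ‖∑ j ∈ G, x j‖ ≤ M / ρ := by
  set Fpos := F.filter fun j => 0 < c j
  set Fneg := F.filter fun j => ¬ 0 < c j
  have hpos : ‖∑ j ∈ Fpos, x j‖ ≤ M / ρ := by
    refine norm_sum_le_div_of_le_coeff x c Fpos hρ (fun j hj => ?_)
      (fun T hT => hM T (hT.trans (Finset.filter_subset _ _)))
    obtain ⟨hjF, hj⟩ := Finset.mem_filter.1 hj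
    simpa [abs_of_pos hj] using hc j hjF
  have hneg : ‖∑ j ∈ Fneg, x j‖ ≤ M / ρ := by
    refine norm_sum_le_div_of_le_coeff x (-c) Fneg hρ (fun j hj => ?_) (fun T hT => ?_)
    · obtain ⟨hjF, hj⟩ := Finset.mem_filter.1 hj
      simpa [abs_of_nonpos (not_lt.1 hj)] using hc j hjF
    · simpa [neg_smul, Finset.sum_neg_distrib] using
        hM T (hT.trans (Finset.filter_subset _ _))
  have hcard : Fpos.card + Fneg.card = F.card := Finset.card_filter_add_card_filter_not _
  by_cases h : Fneg.card ≤ Fpos.card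
  · exact ⟨Fpos, Finset.filter_subset _ _, by omega, hpos⟩
  · exact ⟨Fneg, Finset.filter_subset _ _, by omega, hneg⟩

/-- Among more than `4 N₀` coefficients of size `≥ ρ`, `2 N₀` lie beyond index `2 N₀` and so form
a Schreier set; half of them carry coefficients of one sign, and their plain sum is then bounded by
`C / ρ` (Schreier unconditionality and convexity), although it is large by P1. -/
theorem PropertyP2.of_schreier_of_propertyP1 {X : Type*} [NormedAddCommGroup X]
    [NormedSpace ℝ X] (z : ℕ → X) (C : ℝ)
    (hSch : ∀ (N : ℕ) (a : ℕ → ℝ), (∀ i, N ≤ i → a i = 0) →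
      ∀ F : Finset ℕ, IsSchreierSet F →
        ‖∑ i ∈ F, a i • z i‖ ≤ C * ‖∑ i ∈ Finset.range N, a i • z i‖)
    (hP1 : PropertyP1 z) : PropertyP2 z := by
  intro ρ hρ
  obtain ⟨N₀, hN₀⟩ := hP1 (C / ρ + 1)
  refine ⟨4 * N₀, fun N a hnorm => ?_⟩
  by_contra! hcard
  set B := (Finset.range N).filter fun i => ρ ≤ |a i|
  have hfar : 2 * N₀ ≤ (B.filter fun i => 2 * N₀ ≤ i).card := by
    have hnear : (B.filter fun i => ¬ 2 * N₀ ≤ i).card ≤ 2 * N₀ := by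
      simpa using Finset.card_le_card (s := B.filter fun i => ¬ 2 * N₀ ≤ i)
        (t := Finset.range (2 * N₀)) fun i hi => by simp at hi ⊢; omega
    have := Finset.card_filter_add_card_filter_not (s := B) fun i => 2 * N₀ ≤ i
    omega
  obtain ⟨F, hFfar, hFcard⟩ := Finset.exists_subset_card_eq hfar
  have hFB : F ⊆ B := hFfar.trans (Finset.filter_subset _ _)
  have hFN : F ⊆ Finset.range N := hFB.trans (Finset.filter_subset _ _)
  set c : ℕ → ℝ := fun i => if i < N then a i else 0
  have hca : ∀ T ⊆ Finset.range N, ∑ i ∈ T, c i • z i = ∑ i ∈ T, a i • z i :=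
    fun T hT => Finset.sum_congr rfl fun i hi => by simp [c, Finset.mem_range.1 (hT hi)]
  have hM : ∀ T ⊆ F, ‖∑ i ∈ T, a i • z i‖ ≤ C := by
    intro T hT
    have hSchT : IsSchreierSet T := IsSchreierSet.of_subset_of_card_le hT
      (fun m hm => (Finset.mem_filter.1 (hFfar hm)).2) hFcard.le
    have := hSch N c (fun i hi => if_neg (not_lt.2 hi)) T hSchT
    rwa [hca T (hT.trans hFN), hca _ subset_rfl, hnorm, mul_one] at this
  obtain ⟨G, -, hGcard, hG⟩ := exists_half_subset_norm_sum_le z a F hρ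
    (fun j hj => (Finset.mem_filter.1 (hFB hj)).2) hM
  have := hN₀ G (by omega)
  linarith

theorem statement_18_general
    {X : Type*} [NormedAddCommGroup X] [NormedSpace ℝ X]
    (z : ℕ → X)
    -- (z_i) is Schreier unconditional with some constant Cs
    (Cs : ℝ)
    (hSch : ∀ (N : ℕ) (a : ℕ → ℝ), (∀ i, N ≤ i → a i = 0) →
      ∀ F : Finset ℕ, (∀ m ∈ F, F.card ≤ m) →
        ‖∑ i ∈ F, a i • z i‖ ≤ Cs * ‖∑ i ∈ Finset.range N, a i • z i‖)
    (hP1 : PropertyP1 z) :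
    ∃ φ : ℕ → ℕ, StrictMono φ ∧ PropertyP2 (fun i => z (φ i)) :=
  ⟨id, strictMono_id, PropertyP2.of_schreier_of_propertyP1 z Cs hSch hP1⟩

/-- Proposition 3.7 (d). -/
theorem statement_18
    {X : Type*} [NormedAddCommGroup X] [NormedSpace ℝ X] [CompleteSpace X]
    (z : ℕ → X) (hzsn : IsSeminormalized z) (hzb : IsBasicSeq z)
    -- (z_i) is Schreier unconditional with some constant Cs
    (Cs : ℝ) (hCs : 0 < Cs)
    (hSch : ∀ (N : ℕ) (a : ℕ → ℝ), (∀ i, N ≤ i → a i = 0) →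
      ∀ F : Finset ℕ, (∀ m ∈ F, F.card ≤ m) →
        ‖∑ i ∈ F, a i • z i‖ ≤ Cs * ‖∑ i ∈ Finset.range N, a i • z i‖)
    (hP1 : PropertyP1 z) :
    ∃ φ : ℕ → ℕ, StrictMono φ ∧ PropertyP2 (fun i => z (φ i)) :=
  statement_18_general z Cs hSch hP1

end
end
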